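/- arXiv:2603.17053 — 9 statements merged into one kernel-verified Lean document; each statement's English description precedes it below -/
import Mathlib

section
/- Let f : R^n × R^m → R be differentiable with μ-strongly monotone operator g(z) = (∇_x f, −∇_y f) (μ > 0). Then for all z0=(x0,y0), z1=(x1,y1): f(z1) ≥ f(z0) + ⟨∇_x f(z0), x1−x0⟩ + ⟨∇_y f(z1), y1−y0⟩ + (μ/2)‖x1−x0‖² + (μ/2)‖y1−y0‖². -/
open RealInnerProductSpace
lemma key {E : Type*} [NormedAddCommGroup E] [InnerProductSpace ℝ E] [CompleteSpace E]
    (h : E → ℝ) (hd : Differentiable ℝ h) (μ : ℝ)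
    (hmono : ∀ a b : E, ⟪gradient h b - gradient h a, b - a⟫ ≥ μ * ‖b - a‖ ^ 2)
    (a b : E) :
    h b ≥ h a + ⟪gradient h a, b - a⟫ + μ / 2 * ‖b - a‖ ^ 2 := by
  set v := b - a with hv
  have hφ : ∀ t : ℝ, HasDerivAt (fun s : ℝ => h (a + s • v)) ⟪gradient h (a + t • v), v⟫ t := by
    intro t
    have hc : HasDerivAt (fun s : ℝ => a + s • v) v t := by
      simpa using ((hasDerivAt_id t).smul_const v).const_add a
    have hg := (hd (a + t • v)).hasGradientAt.hasFDerivAt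
    have := hg.comp_hasDerivAt t hc
    simpa [InnerProductSpace.toDual_apply_apply, Function.comp_def] using this
  set ψ : ℝ → ℝ := fun t => h (a + t • v) - t * ⟪gradient h a, v⟫ - μ / 2 * t ^ 2 * ‖v‖ ^ 2
    with hψdef
  have hψ : ∀ t : ℝ, HasDerivAt ψ
      (⟪gradient h (a + t • v), v⟫ - ⟪gradient h a, v⟫ - μ * t * ‖v‖ ^ 2) t := by
    intro t
    have h1 : HasDerivAt (fun s : ℝ => s * ⟪gradient h a, v⟫) ⟪gradient h a, v⟫ t := by
      simpa using (hasDerivAt_id t).mul_const (⟪gradient h a, v⟫)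
    have h2 : HasDerivAt (fun s : ℝ => μ / 2 * s ^ 2 * ‖v‖ ^ 2) (μ * t * ‖v‖ ^ 2) t := by
      have := ((hasDerivAt_pow 2 t).const_mul (μ / 2)).mul_const (‖v‖ ^ 2)
      exact this.congr_deriv (by rw [show (2:ℕ) - 1 = 1 from rfl]; push_cast; ring)
    exact ((hφ t).sub h1).sub h2
  have hmonoOn : MonotoneOn ψ (Set.Icc (0:ℝ) 1) := by
    apply monotoneOn_of_deriv_nonneg (convex_Icc 0 1)
    · exact (Differentiable.continuous fun t => (hψ t).differentiableAt).continuousOn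
    · exact fun t _ => (hψ t).differentiableAt.differentiableWithinAt
    · intro t ht
      rw [interior_Icc] at ht
      rw [(hψ t).deriv]
      have hm := hmono a (a + t • v)
      have hsub : a + t • v - a = t • v := by abel
      rw [hsub, real_inner_smul_right, inner_sub_left] at hm
      have hns : ‖t • v‖ ^ 2 = t ^ 2 * ‖v‖ ^ 2 := by
        rw [norm_smul]
        rw [Real.norm_eq_abs, mul_pow, sq_abs]
      rw [hns] at hm
      nlinarith [ht.1, hm]
  have := hmonoOn (Set.left_mem_Icc.2 zero_le_one) (Set.right_mem_Icc.2 zero_le_one) zero_le_one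
  simp only [hψdef] at this
  have h0 : a + (0:ℝ) • v = a := by simp
  have h1 : a + (1:ℝ) • v = b := by simp [hv]
  rw [h0, h1] at this
  simp at this
  have hg : (fderiv ℝ h a) v = ⟪gradient h a, v⟫ := by simp [gradient, InnerProductSpace.toDual_symm_apply]
  linarith

noncomputable def gradX {n m : ℕ}
    (f : EuclideanSpace ℝ (Fin n) × EuclideanSpace ℝ (Fin m) → ℝ)
    (x : EuclideanSpace ℝ (Fin n)) (y : EuclideanSpace ℝ (Fin m)) :
    EuclideanSpace ℝ (Fin n) :=
  gradient (fun x' => f (x', y)) x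

noncomputable def gradY {n m : ℕ}
    (f : EuclideanSpace ℝ (Fin n) × EuclideanSpace ℝ (Fin m) → ℝ)
    (x : EuclideanSpace ℝ (Fin n)) (y : EuclideanSpace ℝ (Fin m)) :
    EuclideanSpace ℝ (Fin m) :=
  gradient (fun y' => f (x, y')) y

/-- μ-strong monotonicity of the operator implies the strong interpolation inequality. -/
theorem stmt3 (n m : ℕ) (μ : ℝ) (hμ : 0 < μ)
    (f : EuclideanSpace ℝ (Fin n) × EuclideanSpace ℝ (Fin m) → ℝ)
    (hf : Differentiable ℝ f)
    (hmono : ∀ (x0 x1 : EuclideanSpace ℝ (Fin n)) (y0 y1 : EuclideanSpace ℝ (Fin m)),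
      ⟪gradX f x1 y1 - gradX f x0 y0, x1 - x0⟫
        - ⟪gradY f x1 y1 - gradY f x0 y0, y1 - y0⟫
        ≥ μ * (‖x1 - x0‖ ^ 2 + ‖y1 - y0‖ ^ 2)) :
    ∀ (x0 x1 : EuclideanSpace ℝ (Fin n)) (y0 y1 : EuclideanSpace ℝ (Fin m)),
      f (x1, y1) ≥ f (x0, y0) + ⟪gradX f x0 y0, x1 - x0⟫ + ⟪gradY f x1 y1, y1 - y0⟫
        + μ / 2 * ‖x1 - x0‖ ^ 2 + μ / 2 * ‖y1 - y0‖ ^ 2 := by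
  intro x0 x1 y0 y1
  -- Step 1: x ↦ f (x, y0) is strongly convex
  have hd1 : Differentiable ℝ (fun x => f (x, y0)) :=
    hf.comp (differentiable_id.prodMk (differentiable_const y0))
  have hmono1 : ∀ a b : EuclideanSpace ℝ (Fin n),
      ⟪gradient (fun x => f (x, y0)) b - gradient (fun x => f (x, y0)) a, b - a⟫
        ≥ μ * ‖b - a‖ ^ 2 := by
    intro a b
    have := hmono a b y0 y0
    simpa [gradX] using this
  have h1 := key (fun x => f (x, y0)) hd1 μ hmono1 x0 x1
  -- Step 2: y ↦ -f (x1, y) is strongly convex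
  have hd2 : Differentiable ℝ (fun y => -f (x1, y)) :=
    (hf.comp ((differentiable_const x1).prodMk differentiable_id)).neg
  have hgradneg : ∀ y, gradient (fun y' => -f (x1, y')) y = -(gradY f x1 y) := by
    intro y
    have hg : HasGradientAt (fun y' => f (x1, y')) (gradY f x1 y) y :=
      (hf.comp ((differentiable_const x1).prodMk differentiable_id) y).hasGradientAt
    have hneg : HasGradientAt (fun y' => -f (x1, y')) (-(gradY f x1 y)) y := by
      rw [hasGradientAt_iff_hasFDerivAt] at hg ⊢
      simpa [map_neg] using hg.fun_neg
    exact hneg.gradient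
  have hmono2 : ∀ a b : EuclideanSpace ℝ (Fin m),
      ⟪gradient (fun y => -f (x1, y)) b - gradient (fun y => -f (x1, y)) a, b - a⟫
        ≥ μ * ‖b - a‖ ^ 2 := by
    intro a b
    have := hmono x1 x1 a b
    simp only [sub_self, inner_zero_right, norm_zero] at this
    rw [hgradneg, hgradneg]
    have heq : ⟪-(gradY f x1 b) - -(gradY f x1 a), b - a⟫
        = -⟪gradY f x1 b - gradY f x1 a, b - a⟫ := by
      rw [← inner_neg_left]
      congr 1
      abel
    rw [heq]
    nlinarith [this]
  have h2 := key (fun y => -f (x1, y)) hd2 μ hmono2 y1 y0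
  rw [hgradneg, inner_neg_left] at h2
  have hin : ⟪gradY f x1 y1, y0 - y1⟫ = -⟪gradY f x1 y1, y1 - y0⟫ := by
    rw [← inner_neg_right]
    congr 1
    abel
  rw [hin, norm_sub_rev] at h2
  -- combine
  have hx : gradient (fun x => f (x, y0)) x0 = gradX f x0 y0 := rfl
  rw [hx] at h1
  linarith
end

section
/- Let I be a finite index set and (x_i, y_i, g^x_i, g^y_i, f_i)_{i∈I} a sequence with x_i, g^x_i ∈ R^n, y_i, g^y_i ∈ R^m, f_i ∈ R, and let μ > 0. Suppose that for all i, j ∈ I: f_i ≥ f_j + ⟨g^x_j, x_i−x_j⟩ + ⟨g^y_i, y_i−y_j⟩ + (μ/2)‖x_i−x_j‖² + (μ/2)‖y_i−y_j‖². Then there exists a convex–concave function f : R^n × R^m → R whose operator (∇_x f, −∇_y f) is μ-strongly monotone, with g^x_i ∈ ∂_x f(x_i,y_i), g^y_i ∈ ∂_y f(x_i,y_i) (subdifferentials of the convex restriction in x and the concave restriction in y), and f(x_i,y_i) = f_i for all i ∈ I. -/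
open RealInnerProductSpace

/-- The subdifferential of the convex restriction `x ↦ f (x, y)` at `(x, y)`. -/
def subgradX {n m : ℕ}
    (f : EuclideanSpace ℝ (Fin n) × EuclideanSpace ℝ (Fin m) → ℝ)
    (x : EuclideanSpace ℝ (Fin n)) (y : EuclideanSpace ℝ (Fin m)) :
    Set (EuclideanSpace ℝ (Fin n)) :=
  {g | ∀ x', f (x', y) ≥ f (x, y) + ⟪g, x' - x⟫}

/-- The superdifferential of the concave restriction `y ↦ f (x, y)` at `(x, y)`. -/
def supgradY {n m : ℕ}
    (f : EuclideanSpace ℝ (Fin n) × EuclideanSpace ℝ (Fin m) → ℝ)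
    (x : EuclideanSpace ℝ (Fin n)) (y : EuclideanSpace ℝ (Fin m)) :
    Set (EuclideanSpace ℝ (Fin m)) :=
  {g | ∀ y', f (x, y') ≤ f (x, y) + ⟪g, y' - y⟫}

section aux
variable {E : Type*} [NormedAddCommGroup E] [InnerProductSpace ℝ E]

lemma qcomb (u v : E) (a b : ℝ) (hab : a + b = 1) :
    ‖a • u + b • v‖ ^ 2 = a * ‖u‖ ^ 2 + b * ‖v‖ ^ 2 - a * b * ‖u - v‖ ^ 2 := by
  have h1 : ‖a • u + b • v‖ ^ 2 = ⟪a • u + b • v, a • u + b • v⟫ :=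
    (real_inner_self_eq_norm_sq _).symm
  have h2 : ‖u - v‖ ^ 2 = ‖u‖ ^ 2 - 2 * ⟪u, v⟫ + ‖v‖ ^ 2 := norm_sub_sq_real u v
  have h3 : ⟪u, u⟫ = ‖u‖ ^ 2 := real_inner_self_eq_norm_sq u
  have h4 : ⟪v, v⟫ = ‖v‖ ^ 2 := real_inner_self_eq_norm_sq v
  have h5 : ⟪u, v⟫ = ⟪v, u⟫ := real_inner_comm v u
  simp only [h1, inner_add_left, inner_add_right, real_inner_smul_left, real_inner_smul_right]
  linear_combination (a^2)*h3 + (b^2)*h4 - (a*b)*h5 + (a*b)*h2 + (a*‖u‖^2 + b*‖v‖^2)*hab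

def SConv (μ : ℝ) (φ : E → ℝ) : Prop :=
  ∀ v w : E, ∀ a b : ℝ, 0 ≤ a → 0 ≤ b → a + b = 1 →
    φ (a • v + b • w) ≤ a * φ v + b * φ w - μ / 2 * (a * b * ‖v - w‖ ^ 2)

lemma SConv.convexOn {μ : ℝ} (hμ : 0 ≤ μ) {φ : E → ℝ} (h : SConv μ φ) :
    ConvexOn ℝ Set.univ φ := by
  refine ⟨convex_univ, fun v _ w _ a b ha hb hab => ?_⟩
  have := h v w a b ha hb hab
  simp only [smul_eq_mul]
  nlinarith [mul_nonneg (mul_nonneg ha hb) (sq_nonneg ‖v - w‖)]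

lemma SConv.strong_subgrad {μ : ℝ} (hμ : 0 < μ) {φ : E → ℝ} (h : SConv μ φ)
    {u g : E} (hg : ∀ v, φ v ≥ φ u + ⟪g, v - u⟫) (v : E) :
    φ v ≥ φ u + ⟪g, v - u⟫ + μ / 2 * ‖v - u‖ ^ 2 := by
  set C : ℝ := φ v - φ u - ⟪g, v - u⟫ with hC
  have hC0 : 0 ≤ C := by have := hg v; simp only [hC]; linarith
  set D : ℝ := μ / 2 * ‖v - u‖ ^ 2 with hD
  have key : ∀ t : ℝ, 0 < t → t < 1 → D - C ≤ t * D := by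
    intro t ht0 ht1
    have hgp := hg ((1 - t) • u + t • v)
    have hcv := h u v (1 - t) t (by linarith) ht0.le (by ring)
    have hs : ((1 - t) • u + t • v) - u = t • (v - u) := by
      rw [smul_sub]; module
    rw [hs, real_inner_smul_right] at hgp
    have hnorm : ‖u - v‖ = ‖v - u‖ := norm_sub_rev u v
    rw [hnorm] at hcv
    have h6 : t * (D - C - t * D) ≤ 0 := by
      simp only [hC, hD]; nlinarith [hgp, hcv]
    by_contra hcon
    push_neg at hcon
    nlinarith [h6, mul_pos ht0 (show (0:ℝ) < D - C - t * D by linarith)]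
  by_contra hlt
  push_neg at hlt
  have hCD : C < D := by simp only [hC, hD] at hlt ⊢; linarith
  have hDpos : 0 < D := lt_of_le_of_lt hC0 hCD
  have ht := key ((D - C) / (2 * D)) (div_pos (by linarith) (by positivity))
    (by rw [div_lt_one (by positivity)]; nlinarith)
  have he : (D - C) / (2 * D) * D = (D - C) / 2 := by
    field_simp
  rw [he] at ht
  linarith
end aux


lemma interp_cc {E Y : Type*} [NormedAddCommGroup E] [InnerProductSpace ℝ E]
    [NormedAddCommGroup Y] [InnerProductSpace ℝ Y] {I : Type*} [Fintype I] [Nonempty I]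
    (x : I → E) (gx' : I → E) (y : I → Y) (gy' : I → Y) (fv' : I → ℝ)
    (hAB : ∀ i j, fv' j + ⟪gx' j, x i - x j⟫ ≤ fv' i + ⟪gy' i, y j - y i⟫) :
    ∃ F : E → Y → ℝ,
      (∀ (y' : Y) (v w : E) (a b : ℝ), 0 ≤ a → 0 ≤ b → a + b = 1 →
        F (a • v + b • w) y' ≤ a * F v y' + b * F w y') ∧
      (∀ (x' : E) (v w : Y) (a b : ℝ), 0 ≤ a → 0 ≤ b → a + b = 1 →
        a * F x' v + b * F x' w ≤ F x' (a • v + b • w)) ∧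
      (∀ (j : I) (x' : E), fv' j + ⟪gx' j, x' - x j⟫ ≤ F x' (y j)) ∧
      (∀ (i : I) (y' : Y), F (x i) y' ≤ fv' i + ⟪gy' i, y' - y i⟫) := by
  classical
  set Δ : Set (I → ℝ) := stdSimplex ℝ I with hΔ
  have hΔne : Δ.Nonempty := ⟨Pi.single (Classical.arbitrary I) 1,
    single_mem_stdSimplex ℝ _⟩
  set T : (I → ℝ) → E := fun α => ∑ i, α i • x i with hT
  have hTcont : Continuous T :=
    continuous_finset_sum _ fun i _ => (continuous_apply i).smul continuous_const
  set G : E → Y → (I → ℝ) → ℝ := fun x' y' α =>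
    (∑ i, α i * (fv' i + ⟪gy' i, y' - y i⟫))
      + Finset.univ.sup' Finset.univ_nonempty (fun j => ⟪gx' j, x' - T α⟫) with hG
  have hGcont : ∀ x' y', Continuous (G x' y') := by
    intro x' y'
    apply Continuous.add
    · exact continuous_finset_sum _ fun i _ => (continuous_apply i).mul continuous_const
    · exact Continuous.finset_sup'_apply Finset.univ_nonempty fun j _ =>
        Continuous.inner continuous_const (continuous_const.sub hTcont)
  have hbdd : ∀ x' y', BddBelow (G x' y' '' Δ) := fun x' y' =>
    ((isCompact_stdSimplex ℝ I).image (hGcont x' y')).bddBelow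
  have hne : ∀ x' y', (G x' y' '' Δ).Nonempty := fun x' y' => hΔne.image _
  set F : E → Y → ℝ := fun x' y' => sInf (G x' y' '' Δ) with hF
  have hFle : ∀ x' y' α, α ∈ Δ → F x' y' ≤ G x' y' α := fun x' y' α hα =>
    csInf_le (hbdd _ _) ⟨α, hα, rfl⟩
  have hleF : ∀ x' y' (c : ℝ), (∀ α ∈ Δ, c ≤ G x' y' α) → c ≤ F x' y' :=
    fun x' y' c hc => le_csInf (hne _ _) (by rintro _ ⟨α, hα, rfl⟩; exact hc α hα)
  have hmin : ∀ x' y', ∃ α ∈ Δ, F x' y' = G x' y' α := by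
    intro x' y'
    obtain ⟨α, hα, hm⟩ := (isCompact_stdSimplex ℝ I).exists_isMinOn hΔne
      (hGcont x' y').continuousOn
    exact ⟨α, hα, le_antisymm (hFle _ _ _ hα)
      (hleF _ _ _ (fun β hβ => isMinOn_iff.mp hm β hβ))⟩
  refine ⟨F, ?_, ?_, ?_, ?_⟩
  · -- convexity in x
    intro y' v w a b ha hb hab
    obtain ⟨α0, hα0, he0⟩ := hmin v y'
    obtain ⟨α1, hα1, he1⟩ := hmin w y'
    have hmem : a • α0 + b • α1 ∈ Δ := convex_stdSimplex ℝ I hα0 hα1 ha hb hab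
    refine le_trans (hFle _ _ _ hmem) ?_
    rw [he0, he1]
    simp only [hG]
    have hsum : (∑ i, (a • α0 + b • α1) i * (fv' i + ⟪gy' i, y' - y i⟫))
        = a * (∑ i, α0 i * (fv' i + ⟪gy' i, y' - y i⟫))
          + b * (∑ i, α1 i * (fv' i + ⟪gy' i, y' - y i⟫)) := by
      rw [Finset.mul_sum, Finset.mul_sum, ← Finset.sum_add_distrib]
      refine Finset.sum_congr rfl fun i _ => ?_
      simp only [Pi.add_apply, Pi.smul_apply, smul_eq_mul]
      ring
    have hTc : T (a • α0 + b • α1) = a • T α0 + b • T α1 := by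
      simp only [hT]
      rw [Finset.smul_sum, Finset.smul_sum, ← Finset.sum_add_distrib]
      refine Finset.sum_congr rfl fun i _ => ?_
      simp only [Pi.add_apply, Pi.smul_apply, smul_eq_mul, add_smul, smul_smul]
    have harg : (a • v + b • w) - T (a • α0 + b • α1)
        = a • (v - T α0) + b • (w - T α1) := by
      rw [hTc]; module
    have hsup : Finset.univ.sup' Finset.univ_nonempty
          (fun j => ⟪gx' j, (a • v + b • w) - T (a • α0 + b • α1)⟫)
        ≤ a * Finset.univ.sup' Finset.univ_nonempty (fun j => ⟪gx' j, v - T α0⟫)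
          + b * Finset.univ.sup' Finset.univ_nonempty (fun j => ⟪gx' j, w - T α1⟫) := by
      refine Finset.sup'_le _ _ fun j _ => ?_
      rw [harg, inner_add_right, real_inner_smul_right, real_inner_smul_right]
      have l0 : ⟪gx' j, v - T α0⟫ ≤ Finset.univ.sup' Finset.univ_nonempty
          (fun k => ⟪gx' k, v - T α0⟫) :=
        Finset.le_sup' (fun k => (⟪gx' k, v - T α0⟫ : ℝ)) (Finset.mem_univ j)
      have l1 : ⟪gx' j, w - T α1⟫ ≤ Finset.univ.sup' Finset.univ_nonempty
          (fun k => ⟪gx' k, w - T α1⟫) :=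
        Finset.le_sup' (fun k => (⟪gx' k, w - T α1⟫ : ℝ)) (Finset.mem_univ j)
      exact add_le_add (mul_le_mul_of_nonneg_left l0 ha) (mul_le_mul_of_nonneg_left l1 hb)
    rw [hsum]
    linarith [hsup]
  · -- concavity in y
    intro x' v w a b ha hb hab
    refine hleF _ _ _ (fun α hα => ?_)
    have hv := hFle x' v α hα
    have hw := hFle x' w α hα
    have haff : G x' (a • v + b • w) α = a * G x' v α + b * G x' w α := by
      simp only [hG]
      have hsum : ∑ i, α i * (fv' i + ⟪gy' i, (a • v + b • w) - y i⟫)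
          = a * ∑ i, α i * (fv' i + ⟪gy' i, v - y i⟫)
            + b * ∑ i, α i * (fv' i + ⟪gy' i, w - y i⟫) := by
        rw [Finset.mul_sum, Finset.mul_sum, ← Finset.sum_add_distrib]
        refine Finset.sum_congr rfl fun i _ => ?_
        have harg : (a • v + b • w) - y i = a • (v - y i) + b • (w - y i) := by
          have h1 : a • (v - y i) + b • (w - y i) = a • v + b • w - (a + b) • y i := by
            module
          rw [h1, hab, one_smul]
        rw [harg, inner_add_right, real_inner_smul_right, real_inner_smul_right]
        linear_combination (-(α i * fv' i)) * hab
      linear_combination hsum - (Finset.univ.sup' Finset.univ_nonempty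
        (fun j => (⟪gx' j, x' - T α⟫ : ℝ))) * hab
    calc a * F x' v + b * F x' w ≤ a * G x' v α + b * G x' w α :=
          add_le_add (mul_le_mul_of_nonneg_left hv ha) (mul_le_mul_of_nonneg_left hw hb)
      _ = G x' (a • v + b • w) α := haff.symm
  · -- lower bound
    intro j x'
    refine hleF _ _ _ (fun α hα => ?_)
    have hα1 : ∀ i, 0 ≤ α i := hα.1
    have hα2 : ∑ i, α i = 1 := hα.2
    have hs1 : ∑ i, α i * (fv' j + ⟪gx' j, x i - x j⟫)
        ≤ ∑ i, α i * (fv' i + ⟪gy' i, y j - y i⟫) :=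
      Finset.sum_le_sum fun i _ => mul_le_mul_of_nonneg_left (hAB i j) (hα1 i)
    have hs2 : ∑ i, α i * (fv' j + ⟪gx' j, x i - x j⟫)
        = fv' j + ⟪gx' j, T α - x j⟫ := by
      have e1 : ⟪gx' j, T α - x j⟫ = (∑ i, α i * ⟪gx' j, x i⟫) - ⟪gx' j, x j⟫ := by
        simp only [hT, inner_sub_right, inner_sum, real_inner_smul_right]
      rw [e1]
      have e2 : ∀ i, α i * (fv' j + ⟪gx' j, x i - x j⟫)
          = α i * fv' j + α i * ⟪gx' j, x i⟫ - α i * ⟪gx' j, x j⟫ := by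
        intro i; rw [inner_sub_right]; ring
      rw [Finset.sum_congr rfl fun i _ => e2 i]
      rw [Finset.sum_sub_distrib, Finset.sum_add_distrib, ← Finset.sum_mul, ← Finset.sum_mul, hα2]
      ring
    have hs3 : ⟪gx' j, x' - T α⟫ ≤ Finset.univ.sup' Finset.univ_nonempty
        (fun k => ⟪gx' k, x' - T α⟫) :=
      Finset.le_sup' (fun k => (⟪gx' k, x' - T α⟫ : ℝ)) (Finset.mem_univ j)
    have hs4 : ⟪gx' j, T α - x j⟫ + ⟪gx' j, x' - T α⟫ = ⟪gx' j, x' - x j⟫ := by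
      rw [← inner_add_right]; congr 1; abel
    simp only [hG]
    linarith [hs1, hs3]
  · -- upper bound
    intro i y'
    have hmem : Pi.single i 1 ∈ Δ := single_mem_stdSimplex ℝ i
    refine le_trans (hFle _ _ _ hmem) ?_
    have hTs : T (Pi.single i 1) = x i := by
      simp only [hT]
      rw [Finset.sum_eq_single i (fun k _ hk => by simp [Pi.single_eq_of_ne hk])
        (fun h => absurd (Finset.mem_univ i) h)]
      simp
    have hsum : ∑ k, (Pi.single i 1 : I → ℝ) k * (fv' k + ⟪gy' k, y' - y k⟫)
        = fv' i + ⟪gy' i, y' - y i⟫ := by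
      rw [Finset.sum_eq_single i (fun k _ hk => by simp [Pi.single_eq_of_ne hk])
        (fun h => absurd (Finset.mem_univ i) h)]
      simp
    simp only [hG, hsum, hTs, sub_self, inner_zero_right, Finset.sup'_const, add_zero]
    exact le_refl _


section bundle

lemma sconv_bullets {n m : ℕ} {μ : ℝ} (hμ : 0 < μ)
    (f : EuclideanSpace ℝ (Fin n) × EuclideanSpace ℝ (Fin m) → ℝ)
    (hx : ∀ b, SConv μ (fun a => f (a, b)))
    (hy : ∀ a, SConv μ (fun b => -f (a, b))) :
    (∀ b, ConvexOn ℝ Set.univ (fun a => f (a, b))) ∧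
    (∀ a, ConcaveOn ℝ Set.univ (fun b => f (a, b))) ∧
    (∀ (x0 x1 : EuclideanSpace ℝ (Fin n)) (y0 y1 : EuclideanSpace ℝ (Fin m))
        (gx0 : EuclideanSpace ℝ (Fin n)) (gy0 : EuclideanSpace ℝ (Fin m))
        (gx1 : EuclideanSpace ℝ (Fin n)) (gy1 : EuclideanSpace ℝ (Fin m)),
        gx0 ∈ subgradX f x0 y0 → gy0 ∈ supgradY f x0 y0 →
        gx1 ∈ subgradX f x1 y1 → gy1 ∈ supgradY f x1 y1 →
        ⟪gx1 - gx0, x1 - x0⟫ - ⟪gy1 - gy0, y1 - y0⟫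
          ≥ μ * (‖x1 - x0‖ ^ 2 + ‖y1 - y0‖ ^ 2)) := by
  refine ⟨fun b => (hx b).convexOn hμ.le, fun a => ?_, ?_⟩
  · exact neg_convexOn_iff.mp ((hy a).convexOn hμ.le)
  · intro x0 x1 y0 y1 gx0 gy0 gx1 gy1 h0x h0y h1x h1y
    have e1 := (hx y0).strong_subgrad hμ (fun v => h0x v) x1
    have e2 := (hx y1).strong_subgrad hμ (fun v => h1x v) x0
    have h0y' : ∀ v, -f (x0, v) ≥ -f (x0, y0) + ⟪-gy0, v - y0⟫ := by
      intro v; have := h0y v; rw [inner_neg_left]; linarith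
    have h1y' : ∀ v, -f (x1, v) ≥ -f (x1, y1) + ⟪-gy1, v - y1⟫ := by
      intro v; have := h1y v; rw [inner_neg_left]; linarith
    have e3 := (hy x0).strong_subgrad hμ h0y' y1
    have e4 := (hy x1).strong_subgrad hμ h1y' y0
    have r1 : ⟪gx1 - gx0, x1 - x0⟫ = ⟪gx1, x1 - x0⟫ - ⟪gx0, x1 - x0⟫ :=
      inner_sub_left _ _ _
    have r2 : ⟪gy1 - gy0, y1 - y0⟫ = ⟪gy1, y1 - y0⟫ - ⟪gy0, y1 - y0⟫ :=
      inner_sub_left _ _ _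
    have r3 : ⟪gx1, x0 - x1⟫ = -⟪gx1, x1 - x0⟫ := by
      rw [show x0 - x1 = -(x1 - x0) by abel, inner_neg_right]
    have r4 : ‖x0 - x1‖ = ‖x1 - x0‖ := norm_sub_rev _ _
    have r5 : ⟪-gy1, y0 - y1⟫ = ⟪gy1, y1 - y0⟫ := by
      rw [show y0 - y1 = -(y1 - y0) by abel, inner_neg_right, inner_neg_left, neg_neg]
    have r6 : ⟪-gy0, y1 - y0⟫ = -⟪gy0, y1 - y0⟫ := by rw [inner_neg_left]
    have r7 : ‖y0 - y1‖ = ‖y1 - y0‖ := norm_sub_rev _ _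
    rw [r1, r2]
    rw [r3, r4] at e2
    rw [r6] at e3
    rw [r5, r7] at e4
    simp only [ge_iff_le] at e1 e2 e3 e4 ⊢
    linarith

end bundle

/-- Sufficiency of the μ-SCSC interpolation conditions. -/
theorem stmt4 (n m : ℕ) (μ : ℝ) (hμ : 0 < μ) (I : Type*) [Finite I]
    (x : I → EuclideanSpace ℝ (Fin n)) (y : I → EuclideanSpace ℝ (Fin m))
    (gx : I → EuclideanSpace ℝ (Fin n)) (gy : I → EuclideanSpace ℝ (Fin m))
    (fv : I → ℝ)
    (hyp : ∀ i j : I,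
      fv i ≥ fv j + ⟪gx j, x i - x j⟫ + ⟪gy i, y i - y j⟫
        + μ / 2 * ‖x i - x j‖ ^ 2 + μ / 2 * ‖y i - y j‖ ^ 2) :
    ∃ f : EuclideanSpace ℝ (Fin n) × EuclideanSpace ℝ (Fin m) → ℝ,
      (∀ b, ConvexOn ℝ Set.univ (fun a => f (a, b))) ∧
      (∀ a, ConcaveOn ℝ Set.univ (fun b => f (a, b))) ∧
      (∀ (x0 x1 : EuclideanSpace ℝ (Fin n)) (y0 y1 : EuclideanSpace ℝ (Fin m))
        (gx0 : EuclideanSpace ℝ (Fin n)) (gy0 : EuclideanSpace ℝ (Fin m))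
        (gx1 : EuclideanSpace ℝ (Fin n)) (gy1 : EuclideanSpace ℝ (Fin m)),
        gx0 ∈ subgradX f x0 y0 → gy0 ∈ supgradY f x0 y0 →
        gx1 ∈ subgradX f x1 y1 → gy1 ∈ supgradY f x1 y1 →
        ⟪gx1 - gx0, x1 - x0⟫ - ⟪gy1 - gy0, y1 - y0⟫
          ≥ μ * (‖x1 - x0‖ ^ 2 + ‖y1 - y0‖ ^ 2)) ∧
      (∀ i : I, gx i ∈ subgradX f (x i) (y i) ∧ gy i ∈ supgradY f (x i) (y i) ∧
        f (x i, y i) = fv i) := by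
  classical
  rcases isEmpty_or_nonempty I with hI | hI
  · -- empty index set
    set f : EuclideanSpace ℝ (Fin n) × EuclideanSpace ℝ (Fin m) → ℝ :=
      fun p => μ / 2 * ‖p.1‖ ^ 2 - μ / 2 * ‖p.2‖ ^ 2 with hf
    have hx : ∀ b, SConv μ (fun a => f (a, b)) := by
      intro b v w a c ha hc hac
      have hq := qcomb v w a c hac
      simp only [hf]
      rw [hq]
      linear_combination (μ / 2 * ‖b‖ ^ 2) * hac
    have hy : ∀ a, SConv μ (fun b => -f (a, b)) := by
      intro a0 v w a c ha hc hac
      have hq := qcomb v w a c hac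
      simp only [hf]
      rw [hq]
      linear_combination (μ / 2 * ‖a0‖ ^ 2) * hac
    obtain ⟨c1, c2, c3⟩ := sconv_bullets hμ f hx hy
    exact ⟨f, c1, c2, c3, fun i => (IsEmpty.false i).elim⟩
  · -- nonempty index set
    letI := Fintype.ofFinite I
    set gx' : I → EuclideanSpace ℝ (Fin n) := fun j => gx j - μ • x j with hgx'
    set gy' : I → EuclideanSpace ℝ (Fin m) := fun i => gy i + μ • y i with hgy'
    set fv' : I → ℝ := fun i => fv i - μ / 2 * ‖x i‖ ^ 2 + μ / 2 * ‖y i‖ ^ 2 with hfv'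
    have hAB : ∀ i j, fv' j + ⟪gx' j, x i - x j⟫ ≤ fv' i + ⟪gy' i, y j - y i⟫ := by
      intro i j
      have h := hyp i j
      have hx2 : μ / 2 * ‖x i - x j‖ ^ 2
          = μ / 2 * (‖x i‖ ^ 2 - 2 * ⟪x i, x j⟫ + ‖x j‖ ^ 2) := by
        rw [norm_sub_sq_real]
      have hy2 : μ / 2 * ‖y i - y j‖ ^ 2
          = μ / 2 * (‖y i‖ ^ 2 - 2 * ⟪y i, y j⟫ + ‖y j‖ ^ 2) := by
        rw [norm_sub_sq_real]
      have c1 : μ * ⟪x j, x i⟫ = μ * ⟪x i, x j⟫ := by rw [real_inner_comm]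
      have c2 : μ * ⟪y j, y i⟫ = μ * ⟪y i, y j⟫ := by rw [real_inner_comm]
      have c3 : μ * ⟪x j, x j⟫ = μ * ‖x j‖ ^ 2 := by rw [real_inner_self_eq_norm_sq]
      have c4 : μ * ⟪y i, y i⟫ = μ * ‖y i‖ ^ 2 := by rw [real_inner_self_eq_norm_sq]
      simp only [hgx', hgy', hfv', inner_sub_left, inner_add_left,
        real_inner_smul_left, inner_sub_right]
      simp only [inner_sub_right] at h
      nlinarith [h, hx2, hy2, c1, c2, c3, c4]
    obtain ⟨F, hFcx, hFcy, hFlb, hFub⟩ := interp_cc x gx' y gy' fv' hAB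
    set f : EuclideanSpace ℝ (Fin n) × EuclideanSpace ℝ (Fin m) → ℝ :=
      fun p => F p.1 p.2 + μ / 2 * ‖p.1‖ ^ 2 - μ / 2 * ‖p.2‖ ^ 2 with hf
    have hx : ∀ b, SConv μ (fun a => f (a, b)) := by
      intro b v w a c ha hc hac
      have hq := qcomb v w a c hac
      have hcv := hFcx b v w a c ha hc hac
      simp only [hf]
      rw [hq]
      linear_combination hcv + (μ / 2 * ‖b‖ ^ 2) * hac
    have hy : ∀ a0, SConv μ (fun b => -f (a0, b)) := by
      intro a0 v w a c ha hc hac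
      have hq := qcomb v w a c hac
      have hcv := hFcy a0 v w a c ha hc hac
      simp only [hf]
      rw [hq]
      linear_combination hcv + (μ / 2 * ‖a0‖ ^ 2) * hac
    obtain ⟨c1, c2, c3⟩ := sconv_bullets hμ f hx hy
    refine ⟨f, c1, c2, c3, fun i => ?_⟩
    have hval : f (x i, y i) = fv i := by
      have h1 := hFlb i (x i)
      have h2 := hFub i (y i)
      simp only [sub_self, inner_zero_right, add_zero] at h1 h2
      have hFi : F (x i) (y i) = fv' i := le_antisymm h2 h1
      simp only [hf, hFi, hfv']
      ring
    refine ⟨?_, ?_, hval⟩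
    · -- subgradient in x
      intro x'
      have h1 := hFlb i x'
      have hq : ‖x' - x i‖ ^ 2 = ‖x'‖ ^ 2 - 2 * ⟪x', x i⟫ + ‖x i‖ ^ 2 :=
        norm_sub_sq_real x' (x i)
      have hnn : 0 ≤ μ / 2 * ‖x' - x i‖ ^ 2 := by positivity
      have c1 : μ * ⟪x i, x'⟫ = μ * ⟪x', x i⟫ := by rw [real_inner_comm]
      have c3 : μ * ⟪x i, x i⟫ = μ * ‖x i‖ ^ 2 := by rw [real_inner_self_eq_norm_sq]
      have hq' : μ / 2 * ‖x' - x i‖ ^ 2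
          = μ / 2 * (‖x'‖ ^ 2 - 2 * ⟪x', x i⟫ + ‖x i‖ ^ 2) := by rw [hq]
      simp only [hgx', hfv', inner_sub_left, real_inner_smul_left,
        inner_sub_right] at h1
      rw [hval]
      simp only [hf, inner_sub_right, ge_iff_le]
      linarith [h1, hnn, hq', c1, c3]
    · -- supergradient in y
      intro y'
      have h1 := hFub i y'
      have hq : ‖y' - y i‖ ^ 2 = ‖y'‖ ^ 2 - 2 * ⟪y', y i⟫ + ‖y i‖ ^ 2 :=
        norm_sub_sq_real y' (y i)
      have hnn : 0 ≤ μ / 2 * ‖y' - y i‖ ^ 2 := by positivity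
      have c1 : μ * ⟪y i, y'⟫ = μ * ⟪y', y i⟫ := by rw [real_inner_comm]
      have c3 : μ * ⟪y i, y i⟫ = μ * ‖y i‖ ^ 2 := by rw [real_inner_self_eq_norm_sq]
      have hq' : μ / 2 * ‖y' - y i‖ ^ 2
          = μ / 2 * (‖y'‖ ^ 2 - 2 * ⟪y', y i⟫ + ‖y i‖ ^ 2) := by rw [hq]
      simp only [hgy', hfv', inner_add_left, real_inner_smul_left,
        inner_sub_right] at h1
      rw [hval]
      simp only [hf, inner_sub_right]
      linarith [h1, hnn, hq', c1, c3]
end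

section
/- Let μ > 0 and let f : R^n × R^m → R be differentiable, convex–concave, with operator g(z) = (∇_x f(z), −∇_y f(z)) satisfying both ⟨g(z1)−g(z0), z1−z0⟩ = (1/μ)‖g(z1)−g(z0)‖² and ⟨g(z1)−g(z0), z1−z0⟩ = μ‖z1−z0‖² for all z0, z1. Then there exist a ∈ R^n, b ∈ R^m, c ∈ R such that f(x,y) = (μ/2)‖x‖² − (μ/2)‖y‖² + ⟨a,x⟩ + ⟨b,y⟩ + c. -/
open RealInnerProductSpace

section Aux

variable {E : Type*} [NormedAddCommGroup E] [InnerProductSpace ℝ E] [CompleteSpace E]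
variable {F : Type*} [NormedAddCommGroup F] [InnerProductSpace ℝ F] [CompleteSpace F]

lemma aux_key {μ : ℝ} (hμ : 0 < μ) {A u : E} {B v : F}
    (e1 : ⟪A, u⟫ - ⟪B, v⟫ = (1 / μ) * (‖A‖ ^ 2 + ‖B‖ ^ 2))
    (e2 : ⟪A, u⟫ - ⟪B, v⟫ = μ * (‖u‖ ^ 2 + ‖v‖ ^ 2)) :
    A = μ • u ∧ B = -(μ • v) := by
  have hT : ‖A‖ ^ 2 + ‖B‖ ^ 2 = μ * (⟪A, u⟫ - ⟪B, v⟫) := by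
    rw [e1]; field_simp
  have hz : ‖A - μ • u‖ ^ 2 + ‖B + μ • v‖ ^ 2 = 0 := by
    rw [norm_sub_sq_real, norm_add_sq_real, real_inner_smul_right, real_inner_smul_right,
      norm_smul, norm_smul, Real.norm_eq_abs, abs_of_pos hμ]
    nlinarith [e2, hT]
  have h1 : A - μ • u = 0 := by
    have : ‖A - μ • u‖ ^ 2 = 0 := by
      nlinarith [sq_nonneg ‖A - μ • u‖, sq_nonneg ‖B + μ • v‖]
    simpa using sq_eq_zero_iff.mp this
  have h2 : B + μ • v = 0 := by
    have : ‖B + μ • v‖ ^ 2 = 0 := by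
      nlinarith [sq_nonneg ‖A - μ • u‖, sq_nonneg ‖B + μ • v‖]
    simpa using sq_eq_zero_iff.mp this
  refine ⟨sub_eq_zero.mp h1, ?_⟩
  have := sub_eq_zero.mp (by simpa [sub_neg_eq_add] using h2 : B - -(μ • v) = 0)
  exact this

lemma aux_quad_grad (μ : ℝ) (a x : E) :
    HasGradientAt (fun x : E => μ / 2 * ‖x‖ ^ 2 + ⟪a, x⟫) (μ • x + a) x := by
  rw [hasGradientAt_iff_hasFDerivAt]
  have h1 : HasFDerivAt (fun x : E => μ / 2 * ‖x‖ ^ 2)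
      ((μ / 2) • ((2 : ℕ) • (innerSL ℝ x))) x :=
    ((hasStrictFDerivAt_norm_sq x).hasFDerivAt).const_smul (μ / 2)
  have h2 : HasFDerivAt (fun x : E => ⟪a, x⟫) (innerSL ℝ a) x := (innerSL ℝ a).hasFDerivAt
  have : HasFDerivAt (fun x : E => μ / 2 * ‖x‖ ^ 2 + ⟪a, x⟫) _ x := h1.add h2
  refine this.congr_fderiv ?_
  ext y
  simp [InnerProductSpace.toDual_apply_apply, inner_add_left, real_inner_smul_left, two_mul]
  ring

end Aux

/-- A convex–concave function whose operator satisfies the two quadratic identities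
is a saddle quadratic. -/
theorem stmt5 (n m : ℕ) (μ : ℝ) (hμ : 0 < μ)
    (f : EuclideanSpace ℝ (Fin n) × EuclideanSpace ℝ (Fin m) → ℝ)
    (hf : Differentiable ℝ f)
    (hconv : ∀ y, ConvexOn ℝ Set.univ (fun x => f (x, y)))
    (hconc : ∀ x, ConcaveOn ℝ Set.univ (fun y => f (x, y)))
    (h1 : ∀ (x0 x1 : EuclideanSpace ℝ (Fin n)) (y0 y1 : EuclideanSpace ℝ (Fin m)),
      ⟪gradX f x1 y1 - gradX f x0 y0, x1 - x0⟫
        - ⟪gradY f x1 y1 - gradY f x0 y0, y1 - y0⟫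
      = (1 / μ) * (‖gradX f x1 y1 - gradX f x0 y0‖ ^ 2
          + ‖gradY f x1 y1 - gradY f x0 y0‖ ^ 2))
    (h2 : ∀ (x0 x1 : EuclideanSpace ℝ (Fin n)) (y0 y1 : EuclideanSpace ℝ (Fin m)),
      ⟪gradX f x1 y1 - gradX f x0 y0, x1 - x0⟫
        - ⟪gradY f x1 y1 - gradY f x0 y0, y1 - y0⟫
      = μ * (‖x1 - x0‖ ^ 2 + ‖y1 - y0‖ ^ 2)) :
    ∃ (a : EuclideanSpace ℝ (Fin n)) (b : EuclideanSpace ℝ (Fin m)) (c : ℝ),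
      ∀ (x : EuclideanSpace ℝ (Fin n)) (y : EuclideanSpace ℝ (Fin m)),
        f (x, y) = μ / 2 * ‖x‖ ^ 2 - μ / 2 * ‖y‖ ^ 2 + ⟪a, x⟫ + ⟪b, y⟫ + c := by
  set a := gradX f 0 0 with ha
  set b := gradY f 0 0 with hb
  have hkey : ∀ x y, gradX f x y = μ • x + a ∧ gradY f x y = -(μ • y) + b := by
    intro x y
    have e1 := h1 0 x 0 y
    have e2 := h2 0 x 0 y
    rw [sub_zero, sub_zero] at e1 e2
    obtain ⟨hA, hB⟩ := aux_key hμ e1 e2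
    constructor
    · exact sub_eq_iff_eq_add.mp hA
    · exact sub_eq_iff_eq_add.mp hB
  -- differentiability of partial maps
  have hdx : ∀ (y : EuclideanSpace ℝ (Fin m)), Differentiable ℝ (fun x => f (x, y)) :=
    fun y => hf.comp (differentiable_id.prodMk (differentiable_const y))
  have hdy : ∀ (x : EuclideanSpace ℝ (Fin n)), Differentiable ℝ (fun y => f (x, y)) :=
    fun x => hf.comp ((differentiable_const x).prodMk differentiable_id)
  -- the difference in x is constant
  have hFx : ∀ (y : EuclideanSpace ℝ (Fin m)) (x : EuclideanSpace ℝ (Fin n)),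
      HasFDerivAt (fun x => f (x, y) - (μ / 2 * ‖x‖ ^ 2 + ⟪a, x⟫)) (0 : EuclideanSpace ℝ (Fin n) →L[ℝ] ℝ) x := by
    intro y x
    have hg : HasGradientAt (fun x => f (x, y)) (μ • x + a) x := by
      have := ((hdx y) x).hasGradientAt
      rwa [show gradient (fun x' => f (x', y)) x = μ • x + a from (hkey x y).1] at this
    have hq := aux_quad_grad μ a x
    have : HasFDerivAt (fun x => f (x, y) - (μ / 2 * ‖x‖ ^ 2 + ⟪a, x⟫)) _ x := hg.hasFDerivAt.sub hq.hasFDerivAt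
    simpa using this
  have hcx : ∀ (y : EuclideanSpace ℝ (Fin m)) (x : EuclideanSpace ℝ (Fin n)),
      f (x, y) - (μ / 2 * ‖x‖ ^ 2 + ⟪a, x⟫) = f (0, y) - (μ / 2 * ‖(0 : EuclideanSpace ℝ (Fin n))‖ ^ 2 + ⟪a, (0 : EuclideanSpace ℝ (Fin n))⟫) := by
    intro y x
    exact is_const_of_fderiv_eq_zero (fun x => (hFx y x).differentiableAt)
      (fun x => (hFx y x).fderiv) x 0
  -- the difference in y is constant (at x = 0)
  have hFy : ∀ (y : EuclideanSpace ℝ (Fin m)),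
      HasFDerivAt (fun y => f (0, y) - (-(μ / 2 * ‖y‖ ^ 2) + ⟪b, y⟫)) (0 : EuclideanSpace ℝ (Fin m) →L[ℝ] ℝ) y := by
    intro y
    have hg : HasGradientAt (fun y => f (0, y)) (-(μ • y) + b) y := by
      have := ((hdy 0) y).hasGradientAt
      rwa [show gradient (fun y' => f (0, y')) y = -(μ • y) + b from (hkey 0 y).2] at this
    have hq : HasGradientAt (fun y : EuclideanSpace ℝ (Fin m) =>
        -(μ / 2 * ‖y‖ ^ 2) + ⟪b, y⟫) (-(μ • y) + b) y := by
      have := aux_quad_grad (-μ) b y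
      simpa [neg_div, neg_mul, neg_smul] using this
    have : HasFDerivAt (fun y => f (0, y) - (-(μ / 2 * ‖y‖ ^ 2) + ⟪b, y⟫)) _ y := hg.hasFDerivAt.sub hq.hasFDerivAt
    simpa using this
  have hcy : ∀ (y : EuclideanSpace ℝ (Fin m)),
      f (0, y) - (-(μ / 2 * ‖y‖ ^ 2) + ⟪b, y⟫)
        = f (0, 0) - (-(μ / 2 * ‖(0 : EuclideanSpace ℝ (Fin m))‖ ^ 2) + ⟪b, (0 : EuclideanSpace ℝ (Fin m))⟫) := by
    intro y
    exact is_const_of_fderiv_eq_zero (fun y => (hFy y).differentiableAt)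
      (fun y => (hFy y).fderiv) y 0
  refine ⟨a, b, f (0, 0), fun x y => ?_⟩
  have h1 := hcx y x
  have h2 := hcy y
  simp only [norm_zero, inner_zero_right, ne_eq, OfNat.ofNat_ne_zero, not_false_eq_true,
    zero_pow, mul_zero, add_zero, sub_zero, neg_zero, zero_add] at h1 h2
  linarith
end

section
/- Let μ > 0, I an index set, and (x_i, g_i, f_i)_{i∈I} with x_i, g_i ∈ R^d, f_i ∈ R. Suppose that for all i, j ∈ I: f_i = f_j + (1/2)⟨g_i + g_j, x_i − x_j⟩ and g_i − g_j = μ(x_i − x_j). Then there exist a ∈ R^d and b ∈ R such that the function f(x) = (μ/2)‖x‖² + ⟨a,x⟩ + b satisfies ∇f(x_i) = g_i and f(x_i) = f_i for all i ∈ I. -/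
open RealInnerProductSpace

lemma quad_hasGradientAt {F : Type*} [NormedAddCommGroup F] [InnerProductSpace ℝ F]
    [CompleteSpace F] (μ : ℝ) (a : F) (b : ℝ) (p : F) :
    HasGradientAt (fun z => μ / 2 * ‖z‖ ^ 2 + ⟪a, z⟫ + b) (μ • p + a) p := by
  rw [hasGradientAt_iff_hasFDerivAt]
  have h1 : HasFDerivAt (fun z : F => ‖z‖ ^ 2) (2 • innerSL ℝ p) p := by
    simpa using (hasFDerivAt_id p).norm_sq
  have h2 := ((h1.const_mul (μ / 2)).add (innerSL ℝ a).hasFDerivAt).add_const b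
  refine h2.congr_fderiv ?_
  ext v
  simp [inner_add_left, inner_smul_left, real_inner_comm p v]
  ring

/-- Interpolation by μ-strongly-convex μ-smooth functions (quadratics). -/
theorem stmt7 (d : ℕ) (μ : ℝ) (hμ : 0 < μ) (I : Type*) [Nonempty I]
    (x g : I → EuclideanSpace ℝ (Fin d)) (fv : I → ℝ)
    (h1 : ∀ i j : I, fv i = fv j + (1 / 2) * ⟪g i + g j, x i - x j⟫)
    (h2 : ∀ i j : I, g i - g j = μ • (x i - x j)) :
    ∃ (a : EuclideanSpace ℝ (Fin d)) (b : ℝ),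
      ∀ i : I,
        gradient (fun z => μ / 2 * ‖z‖ ^ 2 + ⟪a, z⟫ + b) (x i) = g i ∧
        μ / 2 * ‖x i‖ ^ 2 + ⟪a, x i⟫ + b = fv i := by
  obtain ⟨i₀⟩ := ‹Nonempty I›
  set a : EuclideanSpace ℝ (Fin d) := g i₀ - μ • x i₀ with ha
  refine ⟨a, fv i₀ - μ / 2 * ‖x i₀‖ ^ 2 - ⟪a, x i₀⟫, fun i => ?_⟩
  have hg : g i = g i₀ + μ • (x i - x i₀) := by
    have := h2 i i₀; rw [sub_eq_iff_eq_add] at this; rw [this]; abel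
  constructor
  · rw [(quad_hasGradientAt μ a _ (x i)).gradient, hg, ha]
    module
  · have hv := h1 i i₀
    rw [hg] at hv
    simp only [ha, inner_add_left, inner_sub_left, inner_add_right, inner_sub_right,
      inner_smul_left, inner_smul_right, real_inner_self_eq_norm_sq,
      real_inner_comm (x i₀) (x i), RCLike.ofReal_real_eq_id, id, starRingEnd_apply, star_trivial] at hv ⊢
    nlinarith [hv]
end

section
/- Let μ > 0, I a nonempty index set, and (x_i, y_i, g^x_i, g^y_i, f_i)_{i∈I} a sequence satisfying for all i, j ∈ I: (a) f_i = f_j + (1/2)⟨g^x_i + g^x_j, x_i − x_j⟩ + (1/2)⟨g^y_i + g^y_j, y_i − y_j⟩, (b) g^x_i − g^x_j = μ(x_i − x_j), and (c) g^y_i − g^y_j = −μ(y_i − y_j). Then there exist a ∈ R^n, b ∈ R^m, c ∈ R such that the function f(x,y) = (μ/2)‖x‖² − (μ/2)‖y‖² + ⟨a,x⟩ + ⟨b,y⟩ + c satisfies ∇_x f(x_i,y_i) = g^x_i, ∇_y f(x_i,y_i) = g^y_i, and f(x_i,y_i) = f_i for all i ∈ I. -/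
open RealInnerProductSpace

lemma hasGradientAt_quad {F : Type*} [NormedAddCommGroup F] [InnerProductSpace ℝ F]
    [CompleteSpace F] (μ C : ℝ) (a z : F) :
    HasGradientAt (fun z' => μ / 2 * ‖z'‖ ^ 2 + ⟪a, z'⟫ + C) (μ • z + a) z := by
  rw [hasGradientAt_iff_hasFDerivAt]
  have h1 : HasFDerivAt (fun z' : F => ⟪z', z'⟫) ((innerSL ℝ z) + (innerSL ℝ z)) z := by
    have := (hasFDerivAt_id z).inner ℝ (hasFDerivAt_id z)
    refine this.congr_fderiv ?_
    ext v
    simp [real_inner_comm]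
  have h2 : HasFDerivAt (fun z' : F => μ / 2 * ‖z'‖ ^ 2 + ⟪a, z'⟫ + C)
      ((μ/2) • ((innerSL ℝ z) + (innerSL ℝ z)) + innerSL ℝ a) z := by
    have := ((h1.const_mul (μ/2)).add (innerSL ℝ a).hasFDerivAt).add_const C
    have hf : (fun z' : F => μ / 2 * ‖z'‖ ^ 2 + ⟪a, z'⟫ + C)
        = fun x => ((fun y : F => μ / 2 * ⟪y, y⟫) + (⇑((innerSL ℝ) a) : F → ℝ)) x + C := by
      funext z'
      rw [← real_inner_self_eq_norm_sq]
      simp [real_inner_comm]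
    rw [hf]; exact this
  refine h2.congr_fderiv ?_
  ext v
  simp [InnerProductSpace.toDual_apply_apply, inner_add_left, real_inner_smul_left]
  ring

/-- Interpolation by saddle quadratics. -/
theorem stmt8 (n m : ℕ) (μ : ℝ) (hμ : 0 < μ) (I : Type*) [Nonempty I]
    (x gx : I → EuclideanSpace ℝ (Fin n)) (y gy : I → EuclideanSpace ℝ (Fin m))
    (fv : I → ℝ)
    (ha : ∀ i j : I, fv i = fv j + (1 / 2) * ⟪gx i + gx j, x i - x j⟫
        + (1 / 2) * ⟪gy i + gy j, y i - y j⟫)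
    (hb : ∀ i j : I, gx i - gx j = μ • (x i - x j))
    (hc : ∀ i j : I, gy i - gy j = -μ • (y i - y j)) :
    ∃ (a : EuclideanSpace ℝ (Fin n)) (b : EuclideanSpace ℝ (Fin m)) (c : ℝ),
      ∀ i : I,
        gradX (fun z => μ / 2 * ‖z.1‖ ^ 2 - μ / 2 * ‖z.2‖ ^ 2 + ⟪a, z.1⟫ + ⟪b, z.2⟫ + c)
            (x i) (y i) = gx i ∧
        gradY (fun z => μ / 2 * ‖z.1‖ ^ 2 - μ / 2 * ‖z.2‖ ^ 2 + ⟪a, z.1⟫ + ⟪b, z.2⟫ + c)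
            (x i) (y i) = gy i ∧
        μ / 2 * ‖x i‖ ^ 2 - μ / 2 * ‖y i‖ ^ 2 + ⟪a, x i⟫ + ⟪b, y i⟫ + c = fv i := by
  obtain ⟨i₀⟩ := ‹Nonempty I›
  set a : EuclideanSpace ℝ (Fin n) := gx i₀ - μ • x i₀ with ha'
  set b : EuclideanSpace ℝ (Fin m) := gy i₀ + μ • y i₀ with hb'
  set c : ℝ := fv i₀ - (μ / 2 * ‖x i₀‖ ^ 2 - μ / 2 * ‖y i₀‖ ^ 2 + ⟪a, x i₀⟫ + ⟪b, y i₀⟫)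
    with hc'
  have hgx : ∀ i, gx i = μ • x i + a := by
    intro i
    rw [ha']
    linear_combination (norm := module) hb i i₀
  have hgy : ∀ i, gy i = (-μ) • y i + b := by
    intro i
    rw [hb']
    linear_combination (norm := module) hc i i₀
  refine ⟨a, b, c, fun i => ⟨?_, ?_, ?_⟩⟩
  · show gradient _ _ = _
    have : HasGradientAt
        (fun x' : EuclideanSpace ℝ (Fin n) =>
          μ / 2 * ‖x'‖ ^ 2 + ⟪a, x'⟫ + (-(μ / 2 * ‖y i‖ ^ 2) + ⟪b, y i⟫ + c))
        (μ • x i + a) (x i) := hasGradientAt_quad μ _ a (x i)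
    have heq : (fun x' : EuclideanSpace ℝ (Fin n) =>
          μ / 2 * ‖x'‖ ^ 2 - μ / 2 * ‖y i‖ ^ 2 + ⟪a, x'⟫ + ⟪b, y i⟫ + c)
        = (fun x' : EuclideanSpace ℝ (Fin n) =>
          μ / 2 * ‖x'‖ ^ 2 + ⟪a, x'⟫ + (-(μ / 2 * ‖y i‖ ^ 2) + ⟪b, y i⟫ + c)) := by
      funext x'; ring
    rw [heq, this.gradient, ← hgx i]
  · show gradient _ _ = _
    have : HasGradientAt
        (fun y' : EuclideanSpace ℝ (Fin m) =>
          (-μ) / 2 * ‖y'‖ ^ 2 + ⟪b, y'⟫ + (μ / 2 * ‖x i‖ ^ 2 + ⟪a, x i⟫ + c))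
        ((-μ) • y i + b) (y i) := hasGradientAt_quad (-μ) _ b (y i)
    have heq : (fun y' : EuclideanSpace ℝ (Fin m) =>
          μ / 2 * ‖x i‖ ^ 2 - μ / 2 * ‖y'‖ ^ 2 + ⟪a, x i⟫ + ⟪b, y'⟫ + c)
        = (fun y' : EuclideanSpace ℝ (Fin m) =>
          (-μ) / 2 * ‖y'‖ ^ 2 + ⟪b, y'⟫ + (μ / 2 * ‖x i‖ ^ 2 + ⟪a, x i⟫ + c)) := by
      funext y'; ring
    rw [heq, this.gradient, ← hgy i]
  · have h := ha i i₀
    rw [hgx i, hgx i₀, hgy i, hgy i₀] at h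
    simp only [inner_add_left, inner_sub_right, real_inner_smul_left] at h
    rw [hc']
    have hx1 : ⟪x i, x i⟫ = ‖x i‖ ^ 2 := real_inner_self_eq_norm_sq _
    have hx2 : ⟪x i₀, x i₀⟫ = ‖x i₀‖ ^ 2 := real_inner_self_eq_norm_sq _
    have hy1 : ⟪y i, y i⟫ = ‖y i‖ ^ 2 := real_inner_self_eq_norm_sq _
    have hy2 : ⟪y i₀, y i₀⟫ = ‖y i₀‖ ^ 2 := real_inner_self_eq_norm_sq _
    have hxc : ⟪x i₀, x i⟫ = ⟪x i, x i₀⟫ := real_inner_comm _ _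
    have hyc : ⟪y i₀, y i⟫ = ⟪y i, y i₀⟫ := real_inner_comm _ _
    rw [hx1, hx2, hy1, hy2, hxc, hyc] at h
    linarith [h]
end

section
/- Let 0 < μ < L and let f : R^n × R^m → R be differentiable, with operator g(z) = (∇_x f(z), −∇_y f(z)) being μ-strongly monotone and L-Lipschitz, and with f having L-Lipschitz gradient (as a function on R^n × R^m). Then for all z0 = (x0,y0), z1 = (x1,y1): f(z1) ≥ f(z0) + ⟨∇_x f(z0), x1−x0⟩ + ⟨∇_y f(z1), y1−y0⟩ + (1/(2(L−μ)))‖∇_x f(z1) − ∇_x f(z0) − μ(x1−x0)‖² + (μ/2)‖x1−x0‖² − (L/2)‖y1−y0‖². -/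
open RealInnerProductSpace

lemma key_deriv {n m : ℕ}
    (f : EuclideanSpace ℝ (Fin n) × EuclideanSpace ℝ (Fin m) → ℝ)
    (hf : Differentiable ℝ f) (y : EuclideanSpace ℝ (Fin m))
    (c v : EuclideanSpace ℝ (Fin n)) (t : ℝ) :
    HasDerivAt (fun s : ℝ => f (c + s • v, y)) ⟪gradX f (c + t • v) y, v⟫ t := by
  have hx : DifferentiableAt ℝ (fun x => f (x, y)) (c + t • v) :=
    (hf (c + t • v, y)).comp (c + t • v) (differentiableAt_id.prodMk (differentiableAt_const y))
  have hg : HasGradientAt (fun x => f (x, y)) (gradX f (c + t • v) y) (c + t • v) :=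
    hx.hasGradientAt
  have hc : HasDerivAt (fun s : ℝ => c + s • v) v t := by
    simpa using ((hasDerivAt_id t).smul_const v).const_add c
  have h := hg.hasFDerivAt.comp_hasDerivAt t hc
  simpa [InnerProductSpace.toDual_apply_apply, Function.comp_def] using h

lemma strong_convexity_x {n m : ℕ} (μ : ℝ)
    (f : EuclideanSpace ℝ (Fin n) × EuclideanSpace ℝ (Fin m) → ℝ)
    (hf : Differentiable ℝ f)
    (hmono : ∀ (x0 x1 : EuclideanSpace ℝ (Fin n)) (y0 y1 : EuclideanSpace ℝ (Fin m)),
      ⟪gradX f x1 y1 - gradX f x0 y0, x1 - x0⟫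
        - ⟪gradY f x1 y1 - gradY f x0 y0, y1 - y0⟫
        ≥ μ * (‖x1 - x0‖ ^ 2 + ‖y1 - y0‖ ^ 2))
    (y : EuclideanSpace ℝ (Fin m)) (a b : EuclideanSpace ℝ (Fin n)) :
    f (b, y) ≥ f (a, y) + ⟪gradX f a y, b - a⟫ + μ / 2 * ‖b - a‖ ^ 2 := by
  set v := b - a with hv
  set φ : ℝ → ℝ := fun t => f (a + t • v, y) - t * ⟪gradX f a y, v⟫ - μ * ‖v‖ ^ 2 / 2 * t ^ 2
    with hφ
  have hder : ∀ t : ℝ, HasDerivAt φ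
      (⟪gradX f (a + t • v) y, v⟫ - ⟪gradX f a y, v⟫ - μ * ‖v‖ ^ 2 / 2 * (2 * t)) t := by
    intro t
    have h1 := key_deriv f hf y a v t
    have h2 : HasDerivAt (fun s : ℝ => s * ⟪gradX f a y, v⟫) ⟪gradX f a y, v⟫ t := by
      simpa using hasDerivAt_mul_const (⟪gradX f a y, v⟫)
    have h3 : HasDerivAt (fun s : ℝ => μ * ‖v‖ ^ 2 / 2 * s ^ 2) (μ * ‖v‖ ^ 2 / 2 * (2 * t)) t := by
      simpa using (hasDerivAt_pow 2 t).const_mul (μ * ‖v‖ ^ 2 / 2)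
    exact (h1.sub h2).sub h3
  have hnonneg : ∀ t ∈ interior (Set.Icc (0:ℝ) 1), 0 ≤ deriv φ t := by
    intro t ht
    rw [interior_Icc] at ht
    have hmono' := hmono a (a + t • v) y y
    have hsimp : (a + t • v) - a = t • v := by abel
    rw [hsimp] at hmono'
    simp only [sub_self, inner_zero_right, norm_zero] at hmono'
    have hinner : ⟪gradX f (a + t • v) y - gradX f a y, t • v⟫
        = t * (⟪gradX f (a + t • v) y, v⟫ - ⟪gradX f a y, v⟫) := by
      rw [real_inner_smul_right, inner_sub_left]
    have hn : ‖t • v‖ ^ 2 = t ^ 2 * ‖v‖ ^ 2 := by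
      rw [norm_smul, mul_pow, Real.norm_eq_abs, sq_abs]
    rw [hinner, hn] at hmono'
    have ht0 : 0 < t := ht.1
    have key : ⟪gradX f (a + t • v) y, v⟫ - ⟪gradX f a y, v⟫ ≥ μ * t * ‖v‖ ^ 2 := by
      nlinarith [hmono']
    rw [(hder t).deriv]
    nlinarith [key]
  have hmon : MonotoneOn φ (Set.Icc (0:ℝ) 1) := by
    apply monotoneOn_of_deriv_nonneg (convex_Icc 0 1)
    · exact Continuous.continuousOn (by
        have : ∀ t, HasDerivAt φ _ t := hder
        exact (fun t => (hder t).differentiableAt) |> fun h => by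
          exact Differentiable.continuous h)
    · intro t _
      exact (hder t).differentiableAt.differentiableWithinAt
    · exact hnonneg
  have h01 := hmon (Set.mem_Icc.mpr ⟨le_refl 0, zero_le_one⟩) (Set.mem_Icc.mpr ⟨zero_le_one, le_refl 1⟩) zero_le_one
  have hφ0 : φ 0 = f (a, y) := by simp [hφ]
  have hφ1 : φ 1 = f (b, y) - ⟪gradX f a y, v⟫ - μ * ‖v‖ ^ 2 / 2 := by
    simp [hφ, hv]
  rw [hφ0, hφ1] at h01
  have : ‖b - a‖ ^ 2 = ‖v‖ ^ 2 := by rw [hv]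
  rw [hv] at *
  linarith [h01]

lemma interpx {n m : ℕ} (μ L : ℝ) (hμL : μ < L)
    (f : EuclideanSpace ℝ (Fin n) × EuclideanSpace ℝ (Fin m) → ℝ)
    (hf : Differentiable ℝ f)
    (hmono : ∀ (x0 x1 : EuclideanSpace ℝ (Fin n)) (y0 y1 : EuclideanSpace ℝ (Fin m)),
      ⟪gradX f x1 y1 - gradX f x0 y0, x1 - x0⟫
        - ⟪gradY f x1 y1 - gradY f x0 y0, y1 - y0⟫
        ≥ μ * (‖x1 - x0‖ ^ 2 + ‖y1 - y0‖ ^ 2))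
    (hsmooth : ∀ (x0 x1 : EuclideanSpace ℝ (Fin n)) (y0 y1 : EuclideanSpace ℝ (Fin m)),
      |f (x1, y1) - f (x0, y0) - ⟪gradX f x0 y0, x1 - x0⟫ - ⟪gradY f x0 y0, y1 - y0⟫|
        ≤ L / 2 * (‖x1 - x0‖ ^ 2 + ‖y1 - y0‖ ^ 2))
    (y : EuclideanSpace ℝ (Fin m)) (a b : EuclideanSpace ℝ (Fin n)) :
    f (b, y) ≥ f (a, y) + ⟪gradX f a y, b - a⟫
      + (1 / (2 * (L - μ))) * ‖gradX f b y - gradX f a y - μ • (b - a)‖ ^ 2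
      + μ / 2 * ‖b - a‖ ^ 2 := by
  have hK : (0:ℝ) < L - μ := sub_pos.mpr hμL
  set w := gradX f b y - gradX f a y - μ • (b - a) with hw
  set c2 := b - (1 / (L - μ)) • w with hc2
  have h1 := strong_convexity_x μ f hf hmono y a c2
  have h2 := (abs_le.mp (hsmooth b c2 y y)).2
  simp only [sub_self, inner_zero_right, norm_zero] at h2
  have hca : c2 - a = (b - a) - (1 / (L - μ)) • w := by rw [hc2]; abel
  have hcb : c2 - b = -((1 / (L - μ)) • w) := by rw [hc2]; abel
  have eA : ⟪gradX f a y, c2 - a⟫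
      = ⟪gradX f a y, b - a⟫ - (1 / (L - μ)) * ⟪gradX f a y, w⟫ := by
    rw [hca, inner_sub_right, real_inner_smul_right]
  have eB : ⟪gradX f b y, c2 - b⟫ = -((1 / (L - μ)) * ⟪gradX f b y, w⟫) := by
    rw [hcb, inner_neg_right, real_inner_smul_right]
  have e3 : ‖c2 - b‖ ^ 2 = (1 / (L - μ)) ^ 2 * ‖w‖ ^ 2 := by
    rw [hcb, norm_neg, norm_smul, mul_pow, Real.norm_eq_abs, sq_abs]
  have eN : ‖c2 - a‖ ^ 2 = ‖b - a‖ ^ 2 - 2 * ((1 / (L - μ)) * ⟪b - a, w⟫)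
      + (1 / (L - μ)) ^ 2 * ‖w‖ ^ 2 := by
    rw [hca, @norm_sub_sq_real, real_inner_smul_right, norm_smul, mul_pow,
      Real.norm_eq_abs, sq_abs]
  have hgb : gradX f b y = gradX f a y + (w + μ • (b - a)) := by rw [hw]; abel
  have e5 : ⟪gradX f b y, w⟫ = ⟪gradX f a y, w⟫ + (‖w‖ ^ 2 + μ * ⟪b - a, w⟫) := by
    rw [hgb, inner_add_left, inner_add_left, real_inner_smul_left,
      real_inner_self_eq_norm_sq]
  rw [eA, eN] at h1
  rw [eB, e3, e5] at h2
  have hne : L - μ ≠ 0 := ne_of_gt hK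
  have EQ : (1 / (L - μ)) * (⟪gradX f a y, w⟫ + (‖w‖ ^ 2 + μ * ⟪b - a, w⟫))
      - (1 / (L - μ)) * ⟪gradX f a y, w⟫
      - μ / 2 * (2 * ((1 / (L - μ)) * ⟪b - a, w⟫))
      - L / 2 * ((1 / (L - μ)) ^ 2 * ‖w‖ ^ 2)
      + μ / 2 * ((1 / (L - μ)) ^ 2 * ‖w‖ ^ 2)
      = (1 / (2 * (L - μ))) * ‖w‖ ^ 2 := by
    field_simp
    ring
  linarith [h1, h2, EQ]


/-- Tighter constraint (x-form) for smooth strongly-convex–strongly-concave functions. -/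
theorem stmt11 (n m : ℕ) (μ L : ℝ) (hμ : 0 < μ) (hμL : μ < L)
    (f : EuclideanSpace ℝ (Fin n) × EuclideanSpace ℝ (Fin m) → ℝ)
    (hf : Differentiable ℝ f)
    (hmono : ∀ (x0 x1 : EuclideanSpace ℝ (Fin n)) (y0 y1 : EuclideanSpace ℝ (Fin m)),
      ⟪gradX f x1 y1 - gradX f x0 y0, x1 - x0⟫
        - ⟪gradY f x1 y1 - gradY f x0 y0, y1 - y0⟫
        ≥ μ * (‖x1 - x0‖ ^ 2 + ‖y1 - y0‖ ^ 2))
    (hlip : ∀ (x0 x1 : EuclideanSpace ℝ (Fin n)) (y0 y1 : EuclideanSpace ℝ (Fin m)),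
      ‖gradX f x1 y1 - gradX f x0 y0‖ ^ 2 + ‖gradY f x1 y1 - gradY f x0 y0‖ ^ 2
        ≤ L ^ 2 * (‖x1 - x0‖ ^ 2 + ‖y1 - y0‖ ^ 2))
    (hsmooth : ∀ (x0 x1 : EuclideanSpace ℝ (Fin n)) (y0 y1 : EuclideanSpace ℝ (Fin m)),
      |f (x1, y1) - f (x0, y0) - ⟪gradX f x0 y0, x1 - x0⟫ - ⟪gradY f x0 y0, y1 - y0⟫|
        ≤ L / 2 * (‖x1 - x0‖ ^ 2 + ‖y1 - y0‖ ^ 2)) :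
    ∀ (x0 x1 : EuclideanSpace ℝ (Fin n)) (y0 y1 : EuclideanSpace ℝ (Fin m)),
      f (x1, y1) ≥ f (x0, y0) + ⟪gradX f x0 y0, x1 - x0⟫ + ⟪gradY f x1 y1, y1 - y0⟫
        + (1 / (2 * (L - μ))) * ‖gradX f x1 y1 - gradX f x0 y0 - μ • (x1 - x0)‖ ^ 2
        + μ / 2 * ‖x1 - x0‖ ^ 2 - L / 2 * ‖y1 - y0‖ ^ 2 := by
  intro x0 x1 y0 y1
  have hK : (0:ℝ) < L - μ := sub_pos.mpr hμL
  set u := gradX f x1 y1 - gradX f x0 y0 - μ • (x1 - x0) with hu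
  set x2 := x1 - (1 / (L - μ)) • u with hx2
  have h1 := interpx μ L hμL f hf hmono hsmooth y0 x0 x2
  have h2 := (abs_le.mp (hsmooth x1 x2 y1 y0)).2
  have hxa : x2 - x0 = (x1 - x0) - (1 / (L - μ)) • u := by rw [hx2]; abel
  have hxb : x2 - x1 = -((1 / (L - μ)) • u) := by rw [hx2]; abel
  have eA : ⟪gradX f x0 y0, x2 - x0⟫
      = ⟪gradX f x0 y0, x1 - x0⟫ - (1 / (L - μ)) * ⟪gradX f x0 y0, u⟫ := by
    rw [hxa, inner_sub_right, real_inner_smul_right]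
  have eB : ⟪gradX f x1 y1, x2 - x1⟫ = -((1 / (L - μ)) * ⟪gradX f x1 y1, u⟫) := by
    rw [hxb, inner_neg_right, real_inner_smul_right]
  have e3 : ‖x2 - x1‖ ^ 2 = (1 / (L - μ)) ^ 2 * ‖u‖ ^ 2 := by
    rw [hxb, norm_neg, norm_smul, mul_pow, Real.norm_eq_abs, sq_abs]
  have eN : ‖x2 - x0‖ ^ 2 = ‖x1 - x0‖ ^ 2 - 2 * ((1 / (L - μ)) * ⟪x1 - x0, u⟫)
      + (1 / (L - μ)) ^ 2 * ‖u‖ ^ 2 := by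
    rw [hxa, @norm_sub_sq_real, real_inner_smul_right, norm_smul, mul_pow,
      Real.norm_eq_abs, sq_abs]
  have hgb : gradX f x1 y1 = gradX f x0 y0 + (u + μ • (x1 - x0)) := by rw [hu]; abel
  have e5 : ⟪gradX f x1 y1, u⟫
      = ⟪gradX f x0 y0, u⟫ + (‖u‖ ^ 2 + μ * ⟪x1 - x0, u⟫) := by
    rw [hgb, inner_add_left, inner_add_left, real_inner_smul_left,
      real_inner_self_eq_norm_sq]
  have ey : ⟪gradY f x1 y1, y0 - y1⟫ = -⟪gradY f x1 y1, y1 - y0⟫ := by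
    rw [show y0 - y1 = -(y1 - y0) by abel, inner_neg_right]
  have eyn : ‖y0 - y1‖ ^ 2 = ‖y1 - y0‖ ^ 2 := by rw [norm_sub_rev]
  have hw2 : 0 ≤ (1 / (2 * (L - μ)))
      * ‖gradX f x2 y0 - gradX f x0 y0 - μ • (x2 - x0)‖ ^ 2 := by positivity
  rw [eA, eN] at h1
  rw [eB, e3, e5, ey, eyn] at h2
  have EQ : (1 / (L - μ)) * (⟪gradX f x0 y0, u⟫ + (‖u‖ ^ 2 + μ * ⟪x1 - x0, u⟫))
      - (1 / (L - μ)) * ⟪gradX f x0 y0, u⟫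
      - μ / 2 * (2 * ((1 / (L - μ)) * ⟪x1 - x0, u⟫))
      - L / 2 * ((1 / (L - μ)) ^ 2 * ‖u‖ ^ 2)
      + μ / 2 * ((1 / (L - μ)) ^ 2 * ‖u‖ ^ 2)
      = (1 / (2 * (L - μ))) * ‖u‖ ^ 2 := by
    have hne : L - μ ≠ 0 := ne_of_gt hK
    field_simp
    ring
  linarith [h1, h2, EQ, hw2]
end

section
/- Let 0 < μ < L and let f : R^n × R^m → R be differentiable with μ-strongly monotone and L-Lipschitz operator g(z) = (∇_x f(z), −∇_y f(z)) and L-Lipschitz gradient. Then for all z0, z1: f(z1) ≥ f(z0) + ⟨∇_x f(z0), x1−x0⟩ + ⟨∇_y f(z1), y1−y0⟩ + (1/(2(L−μ)))‖∇_y f(z1) − ∇_y f(z0) + μ(y1−y0)‖² + (μ/2)‖y1−y0‖² − (L/2)‖x1−x0‖². -/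
open RealInnerProductSpace

-- strong concavity value form (1-D argument)
private lemma concave_val {m : ℕ} (μ : ℝ) (g : EuclideanSpace ℝ (Fin m) → ℝ)
    (hg : Differentiable ℝ g)
    (hm : ∀ a b : EuclideanSpace ℝ (Fin m),
      ⟪gradient g b - gradient g a, b - a⟫ ≤ -(μ * ‖b - a‖ ^ 2))
    (y y' : EuclideanSpace ℝ (Fin m)) :
    g y' ≤ g y + ⟪gradient g y, y' - y⟫ - μ / 2 * ‖y' - y‖ ^ 2 := by
  set d := y' - y with hd
  have curve : ∀ t : ℝ, HasDerivAt (fun t : ℝ => y + t • d) d t := by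
    intro t
    simpa using ((hasDerivAt_id t).smul_const d).const_add y
  have hφ : ∀ t : ℝ, HasDerivAt (fun t : ℝ => g (y + t • d))
      ⟪gradient g (y + t • d), d⟫ t := by
    intro t
    have h1 : HasGradientAt g (gradient g (y + t • d)) (y + t • d) :=
      (hg _).hasGradientAt
    have h2 := h1.hasFDerivAt
    have := h2.comp_hasDerivAt t (curve t)
    simpa [InnerProductSpace.toDual_apply_apply, Function.comp_def] using this
  -- derivative bound for t ≥ 0
  have hder : ∀ t : ℝ, 0 < t →
      ⟪gradient g (y + t • d), d⟫ ≤ ⟪gradient g y, d⟫ - μ * t * ‖d‖ ^ 2 := by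
    intro t ht
    have h := hm y (y + t • d)
    have e1 : y + t • d - y = t • d := by abel
    rw [e1] at h
    have h2 : ⟪gradient g (y + t • d) - gradient g y, t • d⟫ ≤ -(μ * (t ^ 2 * ‖d‖ ^ 2)) := by
      simpa [norm_smul, mul_pow, abs_of_pos ht] using h
    rw [real_inner_smul_right] at h2
    have h3 : ⟪gradient g (y + t • d) - gradient g y, d⟫ ≤ -(μ * (t * ‖d‖ ^ 2)) := by
      nlinarith
    rw [inner_sub_left] at h3
    linarith
  -- χ(t) = φ(t) - t φ'(0) + μ‖d‖² t²/2 antitone on [0,1]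
  set c := ⟪gradient g y, d⟫ with hc
  have hχ : ∀ t : ℝ, HasDerivAt
      (fun t : ℝ => g (y + t • d) - t * c + μ * ‖d‖ ^ 2 * t ^ 2 / 2)
      (⟪gradient g (y + t • d), d⟫ - c + μ * ‖d‖ ^ 2 * t) t := by
    intro t
    have := ((hφ t).sub ((hasDerivAt_id t).mul_const c)).add
      (((hasDerivAt_pow 2 t).const_mul (μ * ‖d‖ ^ 2)).div_const 2)
    exact this.congr_deriv (by ring)
  have anti : AntitoneOn
      (fun t : ℝ => g (y + t • d) - t * c + μ * ‖d‖ ^ 2 * t ^ 2 / 2) (Set.Icc 0 1) := by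
    apply antitoneOn_of_deriv_nonpos (convex_Icc 0 1)
    · exact (Differentiable.continuous (fun t => (hχ t).differentiableAt)).continuousOn
    · intro t _
      exact ((hχ t).differentiableAt).differentiableWithinAt
    · intro t ht
      rw [interior_Icc] at ht
      rw [(hχ t).deriv]
      have := hder t ht.1
      nlinarith [ht.1.le, ht.2.le]
  have h01 := anti (Set.mem_Icc.2 ⟨le_refl 0, zero_le_one⟩) (Set.mem_Icc.2 ⟨zero_le_one, le_refl 1⟩) zero_le_one
  simp only [zero_smul, add_zero, one_smul] at h01
  have e2 : y + d = y' := by rw [hd]; abel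
  rw [e2] at h01
  -- h01 : g y' - 1*c + μ‖d‖²/2 ≤ g y - 0 + 0
  push_cast at h01
  nlinarith [h01]

/-- Tighter constraint (y-form) for smooth strongly-convex–strongly-concave functions. -/
theorem stmt12 (n m : ℕ) (μ L : ℝ) (hμ : 0 < μ) (hμL : μ < L)
    (f : EuclideanSpace ℝ (Fin n) × EuclideanSpace ℝ (Fin m) → ℝ)
    (hf : Differentiable ℝ f)
    (hmono : ∀ (x0 x1 : EuclideanSpace ℝ (Fin n)) (y0 y1 : EuclideanSpace ℝ (Fin m)),
      ⟪gradX f x1 y1 - gradX f x0 y0, x1 - x0⟫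
        - ⟪gradY f x1 y1 - gradY f x0 y0, y1 - y0⟫
        ≥ μ * (‖x1 - x0‖ ^ 2 + ‖y1 - y0‖ ^ 2))
    (hlip : ∀ (x0 x1 : EuclideanSpace ℝ (Fin n)) (y0 y1 : EuclideanSpace ℝ (Fin m)),
      ‖gradX f x1 y1 - gradX f x0 y0‖ ^ 2 + ‖gradY f x1 y1 - gradY f x0 y0‖ ^ 2
        ≤ L ^ 2 * (‖x1 - x0‖ ^ 2 + ‖y1 - y0‖ ^ 2))
    (hsmooth : ∀ (x0 x1 : EuclideanSpace ℝ (Fin n)) (y0 y1 : EuclideanSpace ℝ (Fin m)),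
      |f (x1, y1) - f (x0, y0) - ⟪gradX f x0 y0, x1 - x0⟫ - ⟪gradY f x0 y0, y1 - y0⟫|
        ≤ L / 2 * (‖x1 - x0‖ ^ 2 + ‖y1 - y0‖ ^ 2)) :
    ∀ (x0 x1 : EuclideanSpace ℝ (Fin n)) (y0 y1 : EuclideanSpace ℝ (Fin m)),
      f (x1, y1) ≥ f (x0, y0) + ⟪gradX f x0 y0, x1 - x0⟫ + ⟪gradY f x1 y1, y1 - y0⟫
        + (1 / (2 * (L - μ))) * ‖gradY f x1 y1 - gradY f x0 y0 + μ • (y1 - y0)‖ ^ 2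
        + μ / 2 * ‖y1 - y0‖ ^ 2 - L / 2 * ‖x1 - x0‖ ^ 2 := by
  intro x0 x1 y0 y1
  have hk : (0:ℝ) < L - μ := by linarith
  set A : EuclideanSpace ℝ (Fin m) :=
    gradY f x1 y1 - gradY f x0 y0 + μ • (y1 - y0) with hA
  set u : EuclideanSpace ℝ (Fin m) := y0 - (1 / (L - μ)) • A with hu
  -- strong concavity of f (x1, ·)
  have hg : Differentiable ℝ (fun y' => f (x1, y')) :=
    hf.comp ((differentiable_const x1).prodMk differentiable_id)
  have hm : ∀ a b : EuclideanSpace ℝ (Fin m),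
      ⟪gradient (fun y' => f (x1, y')) b - gradient (fun y' => f (x1, y')) a, b - a⟫
        ≤ -(μ * ‖b - a‖ ^ 2) := by
    intro a b
    have h := hmono x1 x1 a b
    simp only [sub_self, inner_zero_right, norm_zero] at h
    have : (0:ℝ) ^ 2 = 0 := by norm_num
    rw [this] at h
    have h2 : gradY f x1 b = gradient (fun y' => f (x1, y')) b := rfl
    have h3 : gradY f x1 a = gradient (fun y' => f (x1, y')) a := rfl
    rw [← h2, ← h3]
    linarith
  have hcv : f (x1, u) ≤ f (x1, y1) + ⟪gradient (fun y' => f (x1, y')) y1, u - y1⟫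
      - μ / 2 * ‖u - y1‖ ^ 2 := concave_val μ (fun y' => f (x1, y')) hg hm y1 u
  have hgy : gradient (fun y' => f (x1, y')) y1 = gradY f x1 y1 := rfl
  rw [hgy] at hcv
  -- smoothness between (x0,y0) and (x1,u)
  have hs := hsmooth x0 x1 y0 u
  rw [abs_le] at hs
  have hs1 := hs.1
  set gx0 := gradX f x0 y0
  set gy0 := gradY f x0 y0
  set gy1 := gradY f x1 y1
  set dy : EuclideanSpace ℝ (Fin m) := y1 - y0 with hdy
  have e0 : u - y0 = -((1 / (L - μ)) • A) := by rw [hu]; abel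
  have e1 : u - y1 = -((1 / (L - μ)) • A) - dy := by rw [hu, hdy]; abel
  have hAdef : A = gy1 - gy0 + μ • dy := by rw [hA, hdy]
  have i1 : ⟪gy0, u - y0⟫ = -((1 / (L - μ)) * ⟪gy0, A⟫) := by
    rw [e0, inner_neg_right, real_inner_smul_right]
  have i2 : ⟪gy1, u - y1⟫ = -((1 / (L - μ)) * ⟪gy1, A⟫) - ⟪gy1, dy⟫ := by
    rw [e1, inner_sub_right, inner_neg_right, real_inner_smul_right]
  have i3 : ⟪gy1, A⟫ - ⟪gy0, A⟫ = ‖A‖ ^ 2 - μ * ⟪dy, A⟫ := by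
    have h5 : ⟪gy1 - gy0, A⟫ = ⟪A - μ • dy, A⟫ := by
      rw [hAdef]; congr 1; abel
    rw [inner_sub_left, inner_sub_left, real_inner_smul_left,
      real_inner_self_eq_norm_sq] at h5
    linarith
  have n0 : ‖u - y0‖ ^ 2 = (1 / (L - μ)) ^ 2 * ‖A‖ ^ 2 := by
    rw [e0, norm_neg, norm_smul, Real.norm_eq_abs, mul_pow, sq_abs]
  have n1 : ‖u - y1‖ ^ 2 = (1 / (L - μ)) ^ 2 * ‖A‖ ^ 2
      + 2 * ((1 / (L - μ)) * ⟪dy, A⟫) + ‖dy‖ ^ 2 := by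
    have e2 : u - y1 = -((1 / (L - μ)) • A + dy) := by rw [e1]; abel
    rw [e2, norm_neg, norm_add_sq_real, norm_smul, Real.norm_eq_abs, mul_pow,
      sq_abs, real_inner_smul_left, real_inner_comm]
  -- scalar identities
  have E1 : μ / 2 * ((1 / (L - μ)) ^ 2 * ‖A‖ ^ 2) - L / 2 * ((1 / (L - μ)) ^ 2 * ‖A‖ ^ 2)
      = -(1 / (2 * (L - μ)) * ‖A‖ ^ 2) := by
    have hne : L - μ ≠ 0 := ne_of_gt hk
    field_simp
    ring
  have i3' : (1 / (L - μ)) * ⟪gy1, A⟫ - (1 / (L - μ)) * ⟪gy0, A⟫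
      = (1 / (L - μ)) * ‖A‖ ^ 2 - μ * ((1 / (L - μ)) * ⟪dy, A⟫) := by
    have := congrArg (fun r => (1 / (L - μ)) * r) i3
    replace this : (1 / (L - μ)) * (⟪gy1, A⟫ - ⟪gy0, A⟫)
        = (1 / (L - μ)) * (‖A‖ ^ 2 - μ * ⟪dy, A⟫) := this
    linarith [this]
  have E2 : 1 / (2 * (L - μ)) * ‖A‖ ^ 2 = ((1 / (L - μ)) * ‖A‖ ^ 2) / 2 := by
    rw [mul_comm 2 (L - μ), ← div_div]
    ring
  rw [i2, n1] at hcv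
  rw [i1, n0] at hs1
  linarith [hcv, hs1, E1, i3', E2]
end

section
/- Let L > μ > 0, and let θ : R^n × R^m → R be differentiable with x ↦ θ(x, y) convex for each y, satisfying for all (x0,y0), (x,y): θ(x,y) ≤ θ(x0,y0) + ⟨∇_x θ(x0,y0), x−x0⟩ + ⟨∇_y θ(x0,y0), y−y0⟩ + (L/2)‖y−y0‖² + ((L−μ)/2)‖x−x0‖². If x* minimizes x ↦ θ(x, y*), then for every (x1, y1): θ(x*, y*) ≤ θ(x1, y1) + ⟨∇_y θ(x1,y1), y* − y1⟩ + (L/2)‖y* − y1‖² − ‖∇_x θ(x1,y1)‖² / (2(L−μ)). -/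
open RealInnerProductSpace

/-!
Evaluate the quadratic upper bound at `(x₁ - (L - μ)⁻¹ • ∇ₓθ(x₁, y₁), y*)`: this step minimizes
the `x`-part `⟪∇ₓθ, x - x₁⟫ + (L - μ)/2 ‖x - x₁‖²` of the bound, with minimum value
`-‖∇ₓθ‖² / (2(L - μ))`, and `θ(x*, y*)` lies below the value of `θ` at that point.
-/

/-- At `c = 0` both sides vanish (`c⁻¹ = 0` and `a / 0 = 0`), so no sign condition on `c` is needed. -/
theorem inner_add_half_mul_norm_sq_sub_inv_smul {E : Type*} [NormedAddCommGroup E]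
    [InnerProductSpace ℝ E] (x g : E) (c : ℝ) :
    ⟪g, x - c⁻¹ • g - x⟫ + c / 2 * ‖x - c⁻¹ • g - x‖ ^ 2 = -(‖g‖ ^ 2 / (2 * c)) := by
  rw [sub_sub_cancel_left, inner_neg_right, real_inner_smul_right, real_inner_self_eq_norm_sq,
    norm_neg, norm_smul, mul_pow, Real.norm_eq_abs, sq_abs]
  rcases eq_or_ne c 0 with rfl | hc
  · simp
  · field_simp
    ring

theorem stmt14_general (n m : ℕ) (μ L : ℝ)
    (θ : EuclideanSpace ℝ (Fin n) × EuclideanSpace ℝ (Fin m) → ℝ)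
    (hub : ∀ (x0 x : EuclideanSpace ℝ (Fin n)) (y0 y : EuclideanSpace ℝ (Fin m)),
      θ (x, y) ≤ θ (x0, y0) + ⟪gradX θ x0 y0, x - x0⟫ + ⟪gradY θ x0 y0, y - y0⟫
        + L / 2 * ‖y - y0‖ ^ 2 + (L - μ) / 2 * ‖x - x0‖ ^ 2)
    (xs : EuclideanSpace ℝ (Fin n)) (ys : EuclideanSpace ℝ (Fin m))
    (hmin : ∀ x : EuclideanSpace ℝ (Fin n), θ (xs, ys) ≤ θ (x, ys)) :
    ∀ (x1 : EuclideanSpace ℝ (Fin n)) (y1 : EuclideanSpace ℝ (Fin m)),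
      θ (xs, ys) ≤ θ (x1, y1) + ⟪gradY θ x1 y1, ys - y1⟫ + L / 2 * ‖ys - y1‖ ^ 2
        - ‖gradX θ x1 y1‖ ^ 2 / (2 * (L - μ)) := by
  intro x1 y1
  set step := x1 - (L - μ)⁻¹ • gradX θ x1 y1
  have hstep := inner_add_half_mul_norm_sq_sub_inv_smul x1 (gradX θ x1 y1) (L - μ)
  linarith [(hmin step).trans (hub x1 step y1 ys)]

/-- Minimizing the quadratic upper bound over x yields the key lower bound. -/
theorem stmt14 (n m : ℕ) (μ L : ℝ) (hμ : 0 < μ) (hμL : μ < L)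
    (θ : EuclideanSpace ℝ (Fin n) × EuclideanSpace ℝ (Fin m) → ℝ)
    (hθ : Differentiable ℝ θ)
    (hconv : ∀ y, ConvexOn ℝ Set.univ (fun x => θ (x, y)))
    (hub : ∀ (x0 x : EuclideanSpace ℝ (Fin n)) (y0 y : EuclideanSpace ℝ (Fin m)),
      θ (x, y) ≤ θ (x0, y0) + ⟪gradX θ x0 y0, x - x0⟫ + ⟪gradY θ x0 y0, y - y0⟫
        + L / 2 * ‖y - y0‖ ^ 2 + (L - μ) / 2 * ‖x - x0‖ ^ 2)
    (xs : EuclideanSpace ℝ (Fin n)) (ys : EuclideanSpace ℝ (Fin m))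
    (hmin : ∀ x : EuclideanSpace ℝ (Fin n), θ (xs, ys) ≤ θ (x, ys)) :
    ∀ (x1 : EuclideanSpace ℝ (Fin n)) (y1 : EuclideanSpace ℝ (Fin m)),
      θ (xs, ys) ≤ θ (x1, y1) + ⟪gradY θ x1 y1, ys - y1⟫ + L / 2 * ‖ys - y1‖ ^ 2
        - ‖gradX θ x1 y1‖ ^ 2 / (2 * (L - μ)) :=
  stmt14_general n m μ L θ hub xs ys hmin
end

section
/- Let 0 < μ < L and let f : R^n × R^m → R be differentiable such that g(z) = (∇_x f(z), −∇_y f(z)) is μ-strongly monotone and (1/L)-cocoercive (⟨g(z1)−g(z0), z1−z0⟩ ≥ (1/L)‖g(z1)−g(z0)‖²). Then for all z0, z1: f(z1) − f(z0) − ⟨∇_x f(z0), x1−x0⟩ − ⟨∇_y f(z1), y1−y0⟩ ≥ (1/(2(L−μ)))‖∇_x f(z1) − ∇_x f(z0) − μ(x1−x0)‖² + (μ/2)‖x1−x0‖². -/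
set_option maxHeartbeats 1000000

open RealInnerProductSpace

section Aux

variable {n m : ℕ}

lemma lineX {f : EuclideanSpace ℝ (Fin n) × EuclideanSpace ℝ (Fin m) → ℝ}
    (hf : Differentiable ℝ f) (x v : EuclideanSpace ℝ (Fin n))
    (y : EuclideanSpace ℝ (Fin m)) (t : ℝ) :
    HasDerivAt (fun t => f (x + t • v, y)) ⟪gradX f (x + t • v) y, v⟫ t := by
  have hdp : DifferentiableAt ℝ (fun x' => f (x', y)) (x + t • v) :=
    (hf _).comp _ (differentiableAt_id.prodMk (differentiableAt_const y))
  have hg : HasGradientAt (fun x' => f (x', y)) (gradX f (x + t • v) y) (x + t • v) :=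
    hdp.hasGradientAt
  have hfd := hg.hasFDerivAt
  have hc : HasDerivAt (fun t : ℝ => x + t • v) v t := by
    simpa using ((hasDerivAt_id t).smul_const v).const_add x
  have := hfd.comp_hasDerivAt t hc
  simpa [InnerProductSpace.toDual_apply_apply, Function.comp_def] using this

lemma lineY {f : EuclideanSpace ℝ (Fin n) × EuclideanSpace ℝ (Fin m) → ℝ}
    (hf : Differentiable ℝ f) (x : EuclideanSpace ℝ (Fin n))
    (y w : EuclideanSpace ℝ (Fin m)) (t : ℝ) :
    HasDerivAt (fun t => f (x, y + t • w)) ⟪gradY f x (y + t • w), w⟫ t := by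
  have hdp : DifferentiableAt ℝ (fun y' => f (x, y')) (y + t • w) :=
    (hf _).comp _ ((differentiableAt_const x).prodMk differentiableAt_id)
  have hg : HasGradientAt (fun y' => f (x, y')) (gradY f x (y + t • w)) (y + t • w) :=
    hdp.hasGradientAt
  have hc : HasDerivAt (fun t : ℝ => y + t • w) w t := by
    simpa using ((hasDerivAt_id t).smul_const w).const_add y
  have := hg.hasFDerivAt.comp_hasDerivAt t hc
  simpa [InnerProductSpace.toDual_apply_apply, Function.comp_def] using this
lemma deriv_lower (φ φ' : ℝ → ℝ) (hd : ∀ t, HasDerivAt φ (φ' t) t) (a : ℝ)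
    (h : ∀ t ∈ Set.Icc (0:ℝ) 1, φ' 0 + a * t ≤ φ' t) :
    φ 0 + φ' 0 + a / 2 ≤ φ 1 := by
  set ψ : ℝ → ℝ := fun t => φ t - φ' 0 * t - a * t ^ 2 / 2 with hψ
  have hdψ : ∀ t, HasDerivAt ψ (φ' t - φ' 0 - a * t) t := by
    intro t
    have h1 : HasDerivAt (fun t : ℝ => φ' 0 * t) (φ' 0) t := by
      simpa using (hasDerivAt_id t).const_mul (φ' 0)
    have h2 : HasDerivAt (fun t : ℝ => a * t ^ 2 / 2) (a * t) t := by
      have := ((hasDerivAt_pow 2 t).const_mul a).div_const 2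
      simpa using this.congr_deriv (by ring)
    exact ((hd t).sub h1).sub h2
  have hmono : MonotoneOn ψ (Set.Icc 0 1) := by
    apply monotoneOn_of_deriv_nonneg (convex_Icc 0 1)
    · exact Continuous.continuousOn (by
        have : Differentiable ℝ ψ := fun t => (hdψ t).differentiableAt
        exact this.continuous)
    · intro t ht
      exact (hdψ t).differentiableAt.differentiableWithinAt
    · intro t ht
      rw [interior_Icc] at ht
      have := h t ⟨le_of_lt ht.1, le_of_lt ht.2⟩
      rw [(hdψ t).deriv]
      linarith
  have := hmono (Set.left_mem_Icc.2 zero_le_one) (Set.right_mem_Icc.2 zero_le_one) zero_le_one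
  simp only [hψ] at this
  nlinarith [this]

lemma P1 {f : EuclideanSpace ℝ (Fin n) × EuclideanSpace ℝ (Fin m) → ℝ} {μ : ℝ}
    (hf : Differentiable ℝ f)
    (hxm : ∀ (x x' : EuclideanSpace ℝ (Fin n)) (y : EuclideanSpace ℝ (Fin m)),
      ⟪gradX f x' y - gradX f x y, x' - x⟫ ≥ μ * ‖x' - x‖ ^ 2)
    (x x' : EuclideanSpace ℝ (Fin n)) (y : EuclideanSpace ℝ (Fin m)) :
    f (x, y) + ⟪gradX f x y, x' - x⟫ + μ / 2 * ‖x' - x‖ ^ 2 ≤ f (x', y) := by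
  obtain ⟨v, rfl⟩ : ∃ v, x' = x + v := ⟨x' - x, by abel⟩
  have ev : x + v - x = v := by abel
  rw [ev]
  have e0 : x + (0:ℝ) • v = x := by simp
  have e1 : x + (1:ℝ) • v = x + v := by simp
  have hb : ∀ t ∈ Set.Icc (0:ℝ) 1,
      (fun t : ℝ => ⟪gradX f (x + t • v) y, v⟫) 0 + (μ * ‖v‖ ^ 2) * t
        ≤ (fun t => ⟪gradX f (x + t • v) y, v⟫) t := by
    intro t ht
    simp only [e0]
    rcases eq_or_lt_of_le ht.1 with h0 | htpos
    · rw [← h0]; simp [e0]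
    · have h := hxm x (x + t • v) y
      have ediff : (x + t • v) - x = t • v := by abel
      rw [ediff, real_inner_smul_right, norm_smul, Real.norm_eq_abs,
        abs_of_pos htpos, inner_sub_left] at h
      nlinarith [h, htpos]
  have key := deriv_lower _ _ (fun t => lineX hf x v y t) (μ * ‖v‖ ^ 2) hb
  simp only [e0, e1] at key
  linarith

-- P2: strong concavity in y
lemma P2 {f : EuclideanSpace ℝ (Fin n) × EuclideanSpace ℝ (Fin m) → ℝ} {μ : ℝ}
    (hf : Differentiable ℝ f)
    (hym : ∀ (x : EuclideanSpace ℝ (Fin n)) (y y' : EuclideanSpace ℝ (Fin m)),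
      ⟪gradY f x y' - gradY f x y, y' - y⟫ ≤ -(μ * ‖y' - y‖ ^ 2))
    (x : EuclideanSpace ℝ (Fin n)) (y y' : EuclideanSpace ℝ (Fin m)) :
    f (x, y') ≤ f (x, y) + ⟪gradY f x y, y' - y⟫ - μ / 2 * ‖y' - y‖ ^ 2 := by
  obtain ⟨w, rfl⟩ : ∃ w, y' = y + w := ⟨y' - y, by abel⟩
  have ew : y + w - y = w := by abel
  rw [ew]
  have e0 : y + (0:ℝ) • w = y := by simp
  have e1 : y + (1:ℝ) • w = y + w := by simp
  have hb : ∀ t ∈ Set.Icc (0:ℝ) 1,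
      (fun t : ℝ => -⟪gradY f x (y + t • w), w⟫) 0 + (μ * ‖w‖ ^ 2) * t
        ≤ (fun t => -⟪gradY f x (y + t • w), w⟫) t := by
    intro t ht
    simp only [e0]
    rcases eq_or_lt_of_le ht.1 with h0 | htpos
    · rw [← h0]; simp [e0]
    · have h := hym x y (y + t • w)
      have ediff : (y + t • w) - y = t • w := by abel
      rw [ediff, real_inner_smul_right, norm_smul, Real.norm_eq_abs,
        abs_of_pos htpos, inner_sub_left] at h
      nlinarith [h, htpos]
  have key := deriv_lower _ _ (fun t => (lineY hf x y w t).neg) (μ * ‖w‖ ^ 2) hb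
  simp only [e0, e1, Pi.neg_apply] at key
  linarith

set_option maxHeartbeats 800000

lemma surj_of_mono {E : Type*} [NormedAddCommGroup E] [InnerProductSpace ℝ E]
    [CompleteSpace E] [Nonempty E] (g : E → E) {μ L : ℝ}
    (hμ : 0 < μ) (hμL : μ < L)
    (hym : ∀ y y' : E, ⟪g y' - g y, y' - y⟫ ≤ -(μ * ‖y' - y‖ ^ 2))
    (hyc : ∀ y y' : E, ⟪g y' - g y, y' - y⟫ ≤ -(1 / L * ‖g y' - g y‖ ^ 2))
    (w : E) : ∃ y, g y = w := by
  have hL : 0 < L := hμ.trans hμL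
  set T : E → E := fun y => y + L⁻¹ • (g y - w) with hT
  have hk0 : (0:ℝ) ≤ 1 - μ ^ 2 / L ^ 2 := by
    have : μ ^ 2 ≤ L ^ 2 := by nlinarith
    have hL2 : (0:ℝ) < L ^ 2 := by positivity
    rw [sub_nonneg, div_le_one hL2]; exact this
  set k : ℝ := Real.sqrt (1 - μ ^ 2 / L ^ 2) with hkdef
  have hknn : 0 ≤ k := Real.sqrt_nonneg _
  have hk2 : k ^ 2 = 1 - μ ^ 2 / L ^ 2 := Real.sq_sqrt hk0
  have hklt : k < 1 := by
    have hp : 0 < μ ^ 2 / L ^ 2 := by positivity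
    nlinarith [hk2, hknn]
  have hlip : ∀ y y', ‖T y' - T y‖ ≤ k * ‖y' - y‖ := by
    intro y y'
    have hTd : T y' - T y = (y' - y) + L⁻¹ • (g y' - g y) := by
      simp only [hT]
      module
    have hsq : ‖T y' - T y‖ ^ 2
        = ‖y' - y‖ ^ 2 + 2 * (L⁻¹ * ⟪y' - y, g y' - g y⟫)
          + L⁻¹ ^ 2 * ‖g y' - g y‖ ^ 2 := by
      rw [hTd, @norm_add_sq_real, real_inner_smul_right, norm_smul]
      rw [Real.norm_eq_abs, abs_of_pos (inv_pos.2 hL)]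
      ring
    have hc := hyc y y'
    have hm := hym y y'
    have hCS : μ * ‖y' - y‖ ^ 2 ≤ ‖g y' - g y‖ * ‖y' - y‖ := by
      have h2 : -⟪g y' - g y, y' - y⟫ ≤ ‖g y' - g y‖ * ‖y' - y‖ := by
        have h3 := abs_real_inner_le_norm (g y' - g y) (y' - y)
        have h4 := abs_le.1 h3
        linarith [h4.1]
      linarith
    have hΔge : μ * ‖y' - y‖ ≤ ‖g y' - g y‖ := by
      rcases eq_or_lt_of_le (norm_nonneg (y' - y)) with h0 | hpos
      · rw [← h0]; simp [norm_nonneg]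
      · nlinarith
    have hsymm : ⟪y' - y, g y' - g y⟫ = ⟪g y' - g y, y' - y⟫ := real_inner_comm _ _
    have hLi : (0:ℝ) < L⁻¹ := inv_pos.2 hL
    have hbound : ‖T y' - T y‖ ^ 2 ≤ k ^ 2 * ‖y' - y‖ ^ 2 := by
      rw [hsq, hsymm, hk2]
      have s1 : 2 * (L⁻¹ * ⟪g y' - g y, y' - y⟫) ≤ -2 * (L⁻¹ * L⁻¹ * ‖g y' - g y‖ ^ 2) := by
        have h := mul_le_mul_of_nonneg_left hc (le_of_lt hLi)
        rw [one_div] at h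
        nlinarith [h]
      have s2 : μ ^ 2 * ‖y' - y‖ ^ 2 ≤ ‖g y' - g y‖ ^ 2 := by
        nlinarith [hΔge, mul_nonneg hμ.le (norm_nonneg (y' - y))]
      have s3 : μ ^ 2 / L ^ 2 * ‖y' - y‖ ^ 2 ≤ L⁻¹ * L⁻¹ * ‖g y' - g y‖ ^ 2 := by
        have h2 := mul_le_mul_of_nonneg_left s2 (mul_nonneg hLi.le hLi.le)
        calc μ ^ 2 / L ^ 2 * ‖y' - y‖ ^ 2 = L⁻¹ * L⁻¹ * (μ ^ 2 * ‖y' - y‖ ^ 2) := by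
              ring
          _ ≤ L⁻¹ * L⁻¹ * ‖g y' - g y‖ ^ 2 := h2
      nlinarith [s1, s3]
    have hbound' : ‖T y' - T y‖ ^ 2 ≤ (k * ‖y' - y‖) ^ 2 := by
      rw [mul_pow]; exact hbound
    exact le_of_pow_le_pow_left₀ two_ne_zero (mul_nonneg hknn (norm_nonneg _)) hbound'
  have hcon : ContractingWith (Real.toNNReal k) T := by
    constructor
    · have h1 : (Real.toNNReal k : ℝ) < 1 := by rw [Real.coe_toNNReal k hknn]; exact hklt
      exact_mod_cast h1
    · apply LipschitzWith.of_dist_le_mul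
      intro y y'
      rw [dist_eq_norm, dist_eq_norm, Real.coe_toNNReal k hknn]
      simpa [norm_sub_rev] using hlip y' y
  obtain ⟨y, hy, _⟩ := hcon.exists_fixedPoint (Classical.arbitrary E) (edist_ne_top _ _)
  refine ⟨y, ?_⟩
  have h5 : y + L⁻¹ • (g y - w) = y := hy
  have h0 : L⁻¹ • (g y - w) = 0 := by
    have h6 := congrArg (fun z => z - y) h5
    simpa [add_sub_cancel_left] using h6
  rcases smul_eq_zero.1 h0 with h | h
  · exact absurd h (by positivity)
  · exact sub_eq_zero.1 h

lemma exY {f : EuclideanSpace ℝ (Fin n) × EuclideanSpace ℝ (Fin m) → ℝ} {μ L : ℝ}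
    (hμ : 0 < μ) (hμL : μ < L)
    (hym : ∀ (x : EuclideanSpace ℝ (Fin n)) (y y' : EuclideanSpace ℝ (Fin m)),
      ⟪gradY f x y' - gradY f x y, y' - y⟫ ≤ -(μ * ‖y' - y‖ ^ 2))
    (hyc : ∀ (x : EuclideanSpace ℝ (Fin n)) (y y' : EuclideanSpace ℝ (Fin m)),
      ⟪gradY f x y' - gradY f x y, y' - y⟫
        ≤ -(1 / L * ‖gradY f x y' - gradY f x y‖ ^ 2))
    (x : EuclideanSpace ℝ (Fin n)) (w : EuclideanSpace ℝ (Fin m)) :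
    ∃ y, gradY f x y = w :=
  surj_of_mono (gradY f x) hμ hμL (hym x) (hyc x) w

lemma gauss_sum (N : ℕ) : ∑ i ∈ Finset.range N, ((i : ℝ) + 1) = N * (N + 1) / 2 := by
  induction N with
  | zero => simp
  | succ k ih =>
    rw [Finset.sum_range_succ, ih]
    push_cast
    ring

lemma coco_scalar {L t a c nd : ℝ} (hL : 0 < L) (ht : 0 ≤ t) (ha : 0 ≤ a)
    (hnd : 0 ≤ nd) (hca : c ≤ a * nd) (h : 1 / L * a ^ 2 ≤ t * c) :
    c ≤ L * t * nd ^ 2 := by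
  rcases eq_or_lt_of_le ha with h0 | hapos
  · rw [← h0] at hca
    nlinarith [mul_nonneg (mul_nonneg hL.le ht) (sq_nonneg nd), hca]
  · have h1 : a ^ 2 ≤ L * (t * c) := by
      have h2 := mul_le_mul_of_nonneg_left h hL.le
      have h3 : L * (1 / L * a ^ 2) = a ^ 2 := by field_simp
      linarith [h2, h3.le, h3.ge]
    have h2 : a ^ 2 ≤ L * t * (a * nd) := by nlinarith [mul_nonneg hL.le ht, hca]
    have h3 : a ≤ L * t * nd := by nlinarith [hapos, h2]
    nlinarith [mul_le_mul_of_nonneg_right h3 hnd, hca]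


end Aux

/-- Tighter constraint for functions with μ-strongly monotone, (1/L)-cocoercive operator. -/
theorem stmt15 (n m : ℕ) (μ L : ℝ) (hμ : 0 < μ) (hμL : μ < L)
    (f : EuclideanSpace ℝ (Fin n) × EuclideanSpace ℝ (Fin m) → ℝ)
    (hf : Differentiable ℝ f)
    (hmono : ∀ (x0 x1 : EuclideanSpace ℝ (Fin n)) (y0 y1 : EuclideanSpace ℝ (Fin m)),
      ⟪gradX f x1 y1 - gradX f x0 y0, x1 - x0⟫
        - ⟪gradY f x1 y1 - gradY f x0 y0, y1 - y0⟫
        ≥ μ * (‖x1 - x0‖ ^ 2 + ‖y1 - y0‖ ^ 2))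
    (hcoco : ∀ (x0 x1 : EuclideanSpace ℝ (Fin n)) (y0 y1 : EuclideanSpace ℝ (Fin m)),
      ⟪gradX f x1 y1 - gradX f x0 y0, x1 - x0⟫
        - ⟪gradY f x1 y1 - gradY f x0 y0, y1 - y0⟫
        ≥ (1 / L) * (‖gradX f x1 y1 - gradX f x0 y0‖ ^ 2
            + ‖gradY f x1 y1 - gradY f x0 y0‖ ^ 2)) :
    ∀ (x0 x1 : EuclideanSpace ℝ (Fin n)) (y0 y1 : EuclideanSpace ℝ (Fin m)),
      f (x1, y1) - f (x0, y0) - ⟪gradX f x0 y0, x1 - x0⟫ - ⟪gradY f x1 y1, y1 - y0⟫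
        ≥ (1 / (2 * (L - μ))) * ‖gradX f x1 y1 - gradX f x0 y0 - μ • (x1 - x0)‖ ^ 2
          + μ / 2 * ‖x1 - x0‖ ^ 2 := by
  have hL : 0 < L := hμ.trans hμL
  have hL' : 0 < L - μ := by linarith
  -- specializations of the hypotheses
  have hxm : ∀ (x x' : EuclideanSpace ℝ (Fin n)) (y : EuclideanSpace ℝ (Fin m)),
      ⟪gradX f x' y - gradX f x y, x' - x⟫ ≥ μ * ‖x' - x‖ ^ 2 := by
    intro x x' y
    have h := hmono x x' y y
    simpa using h
  have hym : ∀ (x : EuclideanSpace ℝ (Fin n)) (y y' : EuclideanSpace ℝ (Fin m)),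
      ⟪gradY f x y' - gradY f x y, y' - y⟫ ≤ -(μ * ‖y' - y‖ ^ 2) := by
    intro x y y'
    have h := hmono x x y y'
    simp only [sub_self, inner_zero_right, norm_zero] at h
    linarith [h]
  have hyc : ∀ (x : EuclideanSpace ℝ (Fin n)) (y y' : EuclideanSpace ℝ (Fin m)),
      ⟪gradY f x y' - gradY f x y, y' - y⟫
        ≤ -(1 / L * ‖gradY f x y' - gradY f x y‖ ^ 2) := by
    intro x y y'
    have h := hcoco x x y y'
    simp only [sub_self, inner_zero_right, norm_zero] at h
    have h2 : (0:ℝ) ≤ 1 / L * ‖gradX f x y' - gradX f x y‖ ^ 2 := by positivity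
    nlinarith [h]
  intro x0 x1 y0 y1
  -- notation
  set gx0 := gradX f x0 y0 with hgx0
  set gx1 := gradX f x1 y1 with hgx1
  set w1 := gradY f x1 y1 with hw1
  set dx := x1 - x0 with hdx
  set u := gx1 - gx0 - μ • dx with hu
  set d : EuclideanSpace ℝ (Fin n) := -((L - μ)⁻¹ • u) with hd
  -- the y-resolvent path
  have hex : ∀ t : ℝ, ∃ y, gradY f (x1 + t • d) y = w1 := fun t =>
    exY hμ hμL hym hyc (x1 + t • d) w1
  classical
  set Y : ℝ → EuclideanSpace ℝ (Fin m) :=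
    fun t => if t = 0 then y1 else Classical.choose (hex t) with hYdef
  have hY : ∀ t : ℝ, gradY f (x1 + t • d) (Y t) = w1 := by
    intro t
    by_cases ht : t = 0
    · subst ht
      simp only [hYdef, if_pos rfl]
      have : x1 + (0:ℝ) • d = x1 := by simp
      rw [this]
    · simp only [hYdef, if_neg ht]
      exact Classical.choose_spec (hex t)
  have hY0 : Y 0 = y1 := by simp [hYdef]
  set q : ℝ → ℝ := fun t => f (x1 + t • d, Y t) - ⟪w1, Y t⟫ with hq
  -- step inequality
  have hstep : ∀ s t : ℝ, q t - q s ≤ (t - s) * ⟪gradX f (x1 + t • d) (Y t), d⟫ := by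
    intro s t
    have h1 : f (x1 + s • d, Y t)
        ≤ f (x1 + s • d, Y s) + ⟪gradY f (x1 + s • d) (Y s), Y t - Y s⟫
          - μ / 2 * ‖Y t - Y s‖ ^ 2 := P2 hf hym (x1 + s • d) (Y s) (Y t)
    rw [hY s] at h1
    have h2 : f (x1 + t • d, Y t) + ⟪gradX f (x1 + t • d) (Y t), (x1 + s • d) - (x1 + t • d)⟫
        + μ / 2 * ‖(x1 + s • d) - (x1 + t • d)‖ ^ 2 ≤ f (x1 + s • d, Y t) :=
      P1 hf hxm (x1 + t • d) (x1 + s • d) (Y t)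
    have hXd : (x1 + s • d) - (x1 + t • d) = (s - t) • d := by module
    rw [hXd, real_inner_smul_right] at h2
    have hin : ⟪w1, Y t - Y s⟫ = ⟪w1, Y t⟫ - ⟪w1, Y s⟫ := inner_sub_right _ _ _
    have hnn1 : (0:ℝ) ≤ μ / 2 * ‖Y t - Y s‖ ^ 2 := by positivity
    have hnn2 : (0:ℝ) ≤ μ / 2 * ‖(s - t) • d‖ ^ 2 := by positivity
    simp only [hq]
    linarith [h1, h2]
  -- gradient increment bound along the resolvent path
  have hG : ∀ t : ℝ, 0 ≤ t →
      ⟪gradX f (x1 + t • d) (Y t) - gx1, d⟫ ≤ L * t * ‖d‖ ^ 2 := by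
    intro t ht
    have h := hcoco x1 (x1 + t • d) y1 (Y t)
    rw [hY t, hw1] at h
    simp only [sub_self, inner_zero_left, norm_zero] at h
    have hXd : (x1 + t • d) - x1 = t • d := by module
    rw [hXd, real_inner_smul_right] at h
    have h' : 1 / L * ‖gradX f (x1 + t • d) (Y t) - gradX f x1 y1‖ ^ 2
        ≤ t * ⟪gradX f (x1 + t • d) (Y t) - gradX f x1 y1, d⟫ := by
      linarith [h]
    have hres := coco_scalar hL ht (norm_nonneg (gradX f (x1 + t • d) (Y t) - gradX f x1 y1))
      (norm_nonneg d) (real_inner_le_norm _ _) h'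
    rw [hgx1]
    exact hres
  -- Riemann-sum smoothness bound
  have hq10 : q 1 - q 0 ≤ ⟪gx1, d⟫ + L / 2 * ‖d‖ ^ 2 := by
    have hbig : ∀ N : ℕ, 1 ≤ N →
        q 1 - q 0 ≤ ⟪gx1, d⟫ + L / 2 * ‖d‖ ^ 2 + L * ‖d‖ ^ 2 / (2 * N) := by
      intro N hN
      have hNpos : (0:ℝ) < N := by exact_mod_cast hN
      have hNne : (N:ℝ) ≠ 0 := ne_of_gt hNpos
      have htel : ∑ i ∈ Finset.range N, (q (((i:ℝ) + 1) / N) - q ((i:ℝ) / N))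
          = q 1 - q 0 := by
        have h := Finset.sum_range_sub (fun i : ℕ => q ((i:ℝ) / N)) N
        have e1 : ((N:ℝ)) / N = 1 := div_self hNne
        have e0 : ((0:ℕ):ℝ) / N = 0 := by simp
        simp only [Nat.cast_add, Nat.cast_one] at h
        rw [e1, e0] at h
        refine Eq.trans ?_ h
        apply Finset.sum_congr rfl
        intro i _
        push_cast
        ring_nf
      have hterm : ∀ i ∈ Finset.range N,
          q (((i:ℝ) + 1) / N) - q ((i:ℝ) / N)
            ≤ (1 / N) * ⟪gx1, d⟫ + (L * ‖d‖ ^ 2 / N ^ 2) * ((i:ℝ) + 1) := by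
        intro i _
        have hs := hstep ((i:ℝ) / N) (((i:ℝ) + 1) / N)
        have hdiff : ((i:ℝ) + 1) / N - (i:ℝ) / N = 1 / N := by
          field_simp
          ring
        rw [hdiff] at hs
        have htnn : (0:ℝ) ≤ ((i:ℝ) + 1) / N := by positivity
        have hGb := hG (((i:ℝ) + 1) / N) htnn
        rw [inner_sub_left] at hGb
        have hNi : (0:ℝ) < 1 / N := by positivity
        have : ⟪gradX f (x1 + (((i:ℝ) + 1) / N) • d) (Y (((i:ℝ) + 1) / N)), d⟫
            ≤ ⟪gx1, d⟫ + L * (((i:ℝ) + 1) / N) * ‖d‖ ^ 2 := by linarith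
        have h4 := mul_le_mul_of_nonneg_left this hNi.le
        calc q (((i:ℝ) + 1) / N) - q ((i:ℝ) / N)
            ≤ (1 / N) * ⟪gradX f (x1 + (((i:ℝ) + 1) / N) • d) (Y (((i:ℝ) + 1) / N)), d⟫ := hs
          _ ≤ (1 / N) * (⟪gx1, d⟫ + L * (((i:ℝ) + 1) / N) * ‖d‖ ^ 2) := h4
          _ = (1 / N) * ⟪gx1, d⟫ + (L * ‖d‖ ^ 2 / N ^ 2) * ((i:ℝ) + 1) := by
              field_simp
      have hsum := Finset.sum_le_sum hterm
      rw [htel] at hsum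
      have hrhs : ∑ i ∈ Finset.range N,
          ((1 / N) * ⟪gx1, d⟫ + (L * ‖d‖ ^ 2 / N ^ 2) * ((i:ℝ) + 1))
          = ⟪gx1, d⟫ + L * ‖d‖ ^ 2 * (N + 1) / (2 * N) := by
        rw [Finset.sum_add_distrib, Finset.sum_const, Finset.card_range, ← Finset.mul_sum,
          gauss_sum, nsmul_eq_mul]
        field_simp
      rw [hrhs] at hsum
      have : L * ‖d‖ ^ 2 * (N + 1) / (2 * N)
          = L / 2 * ‖d‖ ^ 2 + L * ‖d‖ ^ 2 / (2 * N) := by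
        field_simp
      linarith [hsum, this.ge, this.le]
    by_contra hcon
    push_neg at hcon
    set ε := q 1 - q 0 - (⟪gx1, d⟫ + L / 2 * ‖d‖ ^ 2) with hε
    have hεpos : 0 < ε := by simp only [hε]; linarith
    obtain ⟨N, hNgt⟩ := exists_nat_gt (L * ‖d‖ ^ 2 / (2 * ε) + 1)
    have hN1 : 1 ≤ N := by
      by_contra hN0
      push_neg at hN0
      interval_cases N
      · simp at hNgt
        have : (0:ℝ) ≤ L * ‖d‖ ^ 2 / (2 * ε) := by positivity
        linarith
    have hNpos : (0:ℝ) < N := by exact_mod_cast hN1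
    have hlt : L * ‖d‖ ^ 2 / (2 * N) < ε := by
      rw [div_lt_iff₀ (by positivity)]
      have h5 : L * ‖d‖ ^ 2 / (2 * ε) < N := by linarith
      rw [div_lt_iff₀ (by positivity)] at h5
      linarith [h5]
    have := hbig N hN1
    simp only [hε] at hεpos hlt
    linarith
  -- strong convex-concave lower bound from (x0, y0) to (x2, y2)
  set x2 := x1 + (1:ℝ) • d with hx2
  set y2 := Y 1 with hy2
  have hgy2 : gradY f x2 y2 = w1 := hY 1
  have hQ1 : f (x0, y0) + ⟪gx0, x2 - x0⟫ + ⟪w1, y2 - y0⟫ + μ / 2 * ‖x2 - x0‖ ^ 2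
      ≤ f (x2, y2) := by
    have h1 := P1 hf hxm x0 x2 y0
    have h2 := P2 hf hym x2 y2 y0
    rw [hgy2] at h2
    have hin : ⟪w1, y0 - y2⟫ = -⟪w1, y2 - y0⟫ := by
      rw [show y0 - y2 = -(y2 - y0) by abel, inner_neg_right]
    rw [hin] at h2
    have hnn : (0:ℝ) ≤ μ / 2 * ‖y0 - y2‖ ^ 2 := by positivity
    rw [← hgx0] at h1
    linarith
  -- combine
  have hq1 : q 1 = f (x2, y2) - ⟪w1, y2⟫ := rfl
  have hq0 : q 0 = f (x1, y1) - ⟪w1, y1⟫ := by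
    simp only [hq, hY0]
    have : x1 + (0:ℝ) • d = x1 := by simp
    rw [this]
  rw [hq1, hq0] at hq10
  -- final algebra
  have hx2x0 : x2 - x0 = dx + d := by
    simp only [hx2, hdx]
    module
  have hwing : ⟪w1, y2 - y0⟫ = ⟪w1, y2⟫ - ⟪w1, y0⟫ := inner_sub_right _ _ _
  have hwin1 : ⟪w1, y1 - y0⟫ = ⟪w1, y1⟫ - ⟪w1, y0⟫ := inner_sub_right _ _ _
  have hmain : f (x1, y1) - f (x0, y0) - ⟪gx0, dx⟫ - ⟪w1, y1 - y0⟫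
      ≥ ⟪gx0 - gx1, d⟫ + μ / 2 * ‖dx + d‖ ^ 2 - L / 2 * ‖d‖ ^ 2 := by
    rw [hx2x0, hwing] at hQ1
    have hgx0d : ⟪gx0, dx + d⟫ = ⟪gx0, dx⟫ + ⟪gx0, d⟫ := inner_add_right _ _ _
    rw [hgx0d] at hQ1
    rw [hwin1]
    have hsub : ⟪gx0 - gx1, d⟫ = ⟪gx0, d⟫ - ⟪gx1, d⟫ := inner_sub_left _ _ _
    linarith
  have halg : ⟪gx0 - gx1, d⟫ + μ / 2 * ‖dx + d‖ ^ 2 - L / 2 * ‖d‖ ^ 2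
      = 1 / (2 * (L - μ)) * ‖u‖ ^ 2 + μ / 2 * ‖dx‖ ^ 2 := by
    have hgdiff : gx0 - gx1 = -(u + μ • dx) := by
      simp only [hu]
      module
    have h1 : ⟪gx0 - gx1, d⟫ = (L - μ)⁻¹ * (‖u‖ ^ 2 + μ * ⟪dx, u⟫) := by
      rw [hgdiff, hd, inner_neg_neg, real_inner_smul_right, inner_add_left,
        real_inner_smul_left, real_inner_self_eq_norm_sq, real_inner_comm]
    have h2 : ‖dx + d‖ ^ 2 = ‖dx‖ ^ 2 - 2 * ((L - μ)⁻¹ * ⟪dx, u⟫) + (L - μ)⁻¹ ^ 2 * ‖u‖ ^ 2 := by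
      rw [@norm_add_sq_real, hd]
      rw [inner_neg_right, real_inner_smul_right, norm_neg, norm_smul,
        Real.norm_eq_abs, abs_of_pos (inv_pos.2 hL')]
      ring
    have h3 : ‖d‖ ^ 2 = (L - μ)⁻¹ ^ 2 * ‖u‖ ^ 2 := by
      rw [hd, norm_neg, norm_smul, Real.norm_eq_abs, abs_of_pos (inv_pos.2 hL')]
      ring
    rw [h1, h2, h3]
    have hLne : L - μ ≠ 0 := ne_of_gt hL'
    field_simp
    ring
  rw [← halg]
  simp only [hu, hdx] at hmain ⊢
  linarith [hmain]
end
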